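/- arXiv:0805.3415 — 6 statements merged into one kernel-verified Lean document; each statement's English description precedes it below -/
import Mathlib

section
/- Fix positive integers T, τ and an arm index i among K arms. Let (I_t)_{1≤t≤T} be any sequence of arm choices, and for each t let N_{t-τ:t}(i) = Σ_{s=max(t-τ+1,1)}^t 1{I_s = i} be the number of times arm i is played in the window of length τ ending at t. Then for any real m > 0, Σ_{t=1}^T 1{I_t = i and N_{t-τ:t}(i) < m} ≤ ⌈T/τ⌉ · m. -/
open Finset

lemma block_bound (i τ : ℕ) (hτ : 0 < τ) (I : ℕ → ℕ) (m : ℝ) (hm : 0 < m)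
    (a : ℕ) (s : Finset ℕ) (hs : s ⊆ Finset.Icc (a+1) (a+τ)) :
    (∑ t ∈ s,
        if I t = i ∧
            ((∑ u ∈ Finset.Icc (max (t + 1 - τ) 1) t, if I u = i then (1:ℕ) else 0 : ℕ) : ℝ) < m
        then (1:ℝ) else 0) ≤ m := by
  classical
  set P : ℕ → Prop := fun t => I t = i ∧
      ((∑ u ∈ Finset.Icc (max (t + 1 - τ) 1) t, if I u = i then (1:ℕ) else 0 : ℕ) : ℝ) < m
    with hP
  have hsum : (∑ t ∈ s, if P t then (1:ℝ) else 0) = ((s.filter P).card : ℝ) := by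
    rw [Finset.sum_boole]
  rw [show (∑ t ∈ s,
        if I t = i ∧
            ((∑ u ∈ Finset.Icc (max (t + 1 - τ) 1) t, if I u = i then (1:ℕ) else 0 : ℕ) : ℝ) < m
        then (1:ℝ) else 0) = ∑ t ∈ s, if P t then (1:ℝ) else 0 from rfl, hsum]
  rcases (s.filter P).eq_empty_or_nonempty with h | h
  · simp [h]; exact hm.le
  · set t₀ := (s.filter P).max' h with ht₀
    have ht₀mem := (s.filter P).max'_mem h
    have ht₀P : P t₀ := (Finset.mem_filter.mp ht₀mem).2
    have ht₀s : t₀ ∈ s := (Finset.mem_filter.mp ht₀mem).1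
    have ht₀Icc := hs ht₀s
    rw [Finset.mem_Icc] at ht₀Icc
    -- every element of s.filter P lies in the window of t₀ and plays arm i
    have hsub : s.filter P ⊆
        (Finset.Icc (max (t₀ + 1 - τ) 1) t₀).filter (fun u => I u = i) := by
      intro t ht
      have htP : P t := (Finset.mem_filter.mp ht).2
      have hts : t ∈ s := (Finset.mem_filter.mp ht).1
      have htIcc := hs hts
      rw [Finset.mem_Icc] at htIcc
      refine Finset.mem_filter.mpr ⟨Finset.mem_Icc.mpr ⟨?_, Finset.le_max' _ _ ht⟩, htP.1⟩
      refine max_le ?_ (by omega)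
      omega
    have hcard : (s.filter P).card ≤
        ((Finset.Icc (max (t₀ + 1 - τ) 1) t₀).filter (fun u => I u = i)).card :=
      Finset.card_le_card hsub
    have hN : ((Finset.Icc (max (t₀ + 1 - τ) 1) t₀).filter (fun u => I u = i)).card
        = (∑ u ∈ Finset.Icc (max (t₀ + 1 - τ) 1) t₀, if I u = i then (1:ℕ) else 0) := by
      simp [Finset.sum_boole]
    have hlt : ((∑ u ∈ Finset.Icc (max (t₀ + 1 - τ) 1) t₀,
        if I u = i then (1:ℕ) else 0 : ℕ) : ℝ) < m := ht₀P.2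
    calc ((s.filter P).card : ℝ)
        ≤ ((∑ u ∈ Finset.Icc (max (t₀ + 1 - τ) 1) t₀,
            if I u = i then (1:ℕ) else 0 : ℕ) : ℝ) := by
          exact_mod_cast hN ▸ hcard
      _ ≤ m := hlt.le

theorem stmt_4 (T τ K i : ℕ) (hT : 0 < T) (hτ : 0 < τ) (hK : 0 < K) (hi : i < K)
    (I : ℕ → ℕ) (m : ℝ) (hm : 0 < m) :
    (∑ t ∈ Finset.Icc 1 T,
        if I t = i ∧
            ((∑ s ∈ Finset.Icc (max (t + 1 - τ) 1) t, if I s = i then (1:ℕ) else 0 : ℕ) : ℝ) < m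
        then (1:ℝ) else 0) ≤ ⌈(T : ℝ) / τ⌉ * m := by
  classical
  set B : ℕ := (T - 1) / τ + 1 with hB
  set f : ℕ → ℝ := fun t =>
    if I t = i ∧
        ((∑ s ∈ Finset.Icc (max (t + 1 - τ) 1) t, if I s = i then (1:ℕ) else 0 : ℕ) : ℝ) < m
    then (1:ℝ) else 0 with hf
  have hmap : ∀ t ∈ Finset.Icc 1 T, (t - 1) / τ ∈ Finset.range B := by
    intro t ht
    rw [Finset.mem_Icc] at ht
    rw [Finset.mem_range, hB]
    have : (t - 1) / τ ≤ (T - 1) / τ := Nat.div_le_div_right (by omega)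
    omega
  have hfib := Finset.sum_fiberwise_of_maps_to hmap f
  rw [← hfib]
  have hblock : ∀ j ∈ Finset.range B,
      (∑ t ∈ (Finset.Icc 1 T).filter (fun t => (t - 1) / τ = j), f t) ≤ m := by
    intro j _
    apply block_bound i τ hτ I m hm (j * τ)
    intro t ht
    rw [Finset.mem_filter, Finset.mem_Icc] at ht
    obtain ⟨⟨h1, h2⟩, h3⟩ := ht
    have hle : j * τ ≤ t - 1 := by
      rw [← h3]; exact Nat.div_mul_le_self (t - 1) τ
    have hlt : t - 1 < (j + 1) * τ := by
      rw [← Nat.div_lt_iff_lt_mul hτ, h3]; omega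
    rw [Finset.mem_Icc]
    constructor
    · omega
    · calc t ≤ t - 1 + 1 := by omega
        _ ≤ (j + 1) * τ := hlt
        _ = j * τ + τ := by ring
  calc (∑ j ∈ Finset.range B, ∑ t ∈ (Finset.Icc 1 T).filter (fun t => (t - 1) / τ = j), f t)
      ≤ ∑ j ∈ Finset.range B, m := Finset.sum_le_sum hblock
    _ = (B : ℝ) * m := by simp [mul_comm]
    _ ≤ (⌈(T : ℝ) / τ⌉ : ℝ) * m := by
        apply mul_le_mul_of_nonneg_right _ hm.le
        have hBle : (B : ℤ) ≤ ⌈(T : ℝ) / τ⌉ := by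
          have key : (((T - 1) / τ : ℕ) : ℤ) < ⌈(T : ℝ) / τ⌉ := by
            rw [Int.lt_ceil]
            have h1 : ((T - 1) / τ : ℕ) * τ ≤ T - 1 := Nat.div_mul_le_self _ _
            have h2 : (((T - 1) / τ : ℕ) : ℝ) * τ < T := by
              have h3 : ((T - 1) / τ : ℕ) * τ < T := by omega
              exact_mod_cast h3
            rw [lt_div_iff₀ (by exact_mod_cast hτ)]
            exact h2
          have hBeq : (B : ℤ) = (((T - 1) / τ : ℕ) : ℤ) + 1 := by
            rw [hB]; push_cast; ring
          omega
        calc (B : ℝ) = ((B : ℤ) : ℝ) := (Int.cast_natCast B).symm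
          _ ≤ ((⌈(T : ℝ) / τ⌉ : ℤ) : ℝ) := by exact_mod_cast hBle
end

section
/- Fix a discount factor γ ∈ (0,1), positive integers T, τ, a real A > 0, and a sequence of arm choices (I_t)_{1≤t≤T}. Define the discounted play-count N_t(γ, i) = Σ_{s=1}^t γ^{t-s} 1{I_s = i}. Then Σ_{t=1}^T 1{I_t = i and N_t(γ, i) < A} ≤ ⌈T/τ⌉ · A · γ^{-τ}. -/
private lemma window_le {γ : ℝ} (hγ0 : 0 < γ) (hγ1 : γ < 1) (τ i t : ℕ) (I : ℕ → ℕ) :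
    γ ^ τ * (((Finset.Icc 1 t).filter (fun s => t - s < τ ∧ I s = i)).card : ℝ)
      ≤ ∑ s ∈ Finset.Icc 1 t, γ ^ (t - s) * (if I s = i then (1:ℝ) else 0) := by
  classical
  have h1 : γ ^ τ * (((Finset.Icc 1 t).filter (fun s => t - s < τ ∧ I s = i)).card : ℝ)
      = ∑ s ∈ (Finset.Icc 1 t).filter (fun s => t - s < τ ∧ I s = i), γ ^ τ := by
    rw [Finset.sum_const, nsmul_eq_mul, mul_comm]
  rw [h1]
  have h2 : ∑ s ∈ (Finset.Icc 1 t).filter (fun s => t - s < τ ∧ I s = i), γ ^ τ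
      ≤ ∑ s ∈ (Finset.Icc 1 t).filter (fun s => t - s < τ ∧ I s = i),
          γ ^ (t - s) * (if I s = i then (1:ℝ) else 0) := by
    refine Finset.sum_le_sum (fun s hs => ?_)
    rw [Finset.mem_filter] at hs
    rw [if_pos hs.2.2, mul_one]
    exact pow_le_pow_of_le_one hγ0.le hγ1.le (le_of_lt hs.2.1)
  refine h2.trans (Finset.sum_le_sum_of_subset_of_nonneg (Finset.filter_subset _ _)
    (fun s _ _ => ?_))
  positivity

theorem stmt_5 (γ : ℝ) (hγ : γ ∈ Set.Ioo (0:ℝ) 1) (T τ i : ℕ) (hT : 0 < T) (hτ : 0 < τ)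
    (A : ℝ) (hA : 0 < A) (I : ℕ → ℕ) :
    (∑ t ∈ Finset.Icc 1 T,
        if I t = i ∧
            (∑ s ∈ Finset.Icc 1 t, γ ^ (t - s) * (if I s = i then (1:ℝ) else 0)) < A
        then (1:ℝ) else 0) ≤ ⌈(T : ℝ) / τ⌉ * A * γ ^ (-(τ : ℤ)) := by
  classical
  obtain ⟨hγ0, hγ1⟩ := hγ
  have hγτ : (0:ℝ) < γ ^ τ := pow_pos hγ0 τ
  set Q : Finset ℕ := (Finset.Icc 1 T).filter (fun t => I t = i ∧
      (∑ s ∈ Finset.Icc 1 t, γ ^ (t - s) * (if I s = i then (1:ℝ) else 0)) < A) with hQ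
  have hsum : (∑ t ∈ Finset.Icc 1 T,
      if I t = i ∧
          (∑ s ∈ Finset.Icc 1 t, γ ^ (t - s) * (if I s = i then (1:ℝ) else 0)) < A
      then (1:ℝ) else 0) = (Q.card : ℝ) := by
    rw [hQ, ← Finset.sum_filter, Finset.sum_const, nsmul_eq_mul, mul_one]
  rw [hsum]
  set M : ℕ := (T - 1) / τ + 1 with hM
  -- fiberwise decomposition
  have hfib : Q.card = ∑ j ∈ Finset.range M, (Q.filter (fun t => (t - 1) / τ = j)).card := by
    refine Finset.card_eq_sum_card_fiberwise (fun t ht => ?_)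
    rw [hQ, Finset.mem_coe, Finset.mem_filter, Finset.mem_Icc] at ht
    rw [Finset.mem_coe, Finset.mem_range, hM]
    have : (t - 1) / τ ≤ (T - 1) / τ := Nat.div_le_div_right (by omega)
    omega
  -- per-fiber bound
  have hcj : ∀ j, ((Q.filter (fun t => (t - 1) / τ = j)).card : ℝ) ≤ A / γ ^ τ := by
    intro j
    set F : Finset ℕ := Q.filter (fun t => (t - 1) / τ = j) with hF
    rcases F.eq_empty_or_nonempty with hemp | hne
    · rw [hemp]; simp; positivity
    · set t₀ : ℕ := F.max' hne with ht₀
      have ht₀F : t₀ ∈ F := F.max'_mem hne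
      have ht₀Q : t₀ ∈ Q := (Finset.mem_filter.mp ht₀F).1
      have ht₀j : (t₀ - 1) / τ = j := (Finset.mem_filter.mp ht₀F).2
      obtain ⟨ht₀Icc, hIt₀, hNt₀⟩ := Finset.mem_filter.mp ht₀Q
      rw [Finset.mem_Icc] at ht₀Icc
      have hsub : F ⊆ (Finset.Icc 1 t₀).filter (fun s => t₀ - s < τ ∧ I s = i) := by
        intro s hsF
        have hsQ : s ∈ Q := (Finset.mem_filter.mp hsF).1
        have hsj : (s - 1) / τ = j := (Finset.mem_filter.mp hsF).2
        obtain ⟨hsIcc, hIs, _⟩ := Finset.mem_filter.mp hsQ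
        rw [Finset.mem_Icc] at hsIcc
        have hst : s ≤ t₀ := F.le_max' s hsF
        rw [Finset.mem_filter, Finset.mem_Icc]
        refine ⟨⟨hsIcc.1, hst⟩, ?_, hIs⟩
        -- t₀ - s < τ : both in same length-τ block
        have h1 : τ * j ≤ s - 1 := by
          rw [← hsj, mul_comm]; exact Nat.div_mul_le_self _ _
        have h2 : t₀ - 1 < τ * j + τ := by
          have hmod : (t₀ - 1) % τ < τ := Nat.mod_lt _ hτ
          have hdm : τ * ((t₀ - 1) / τ) + (t₀ - 1) % τ = t₀ - 1 := Nat.div_add_mod _ _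
          rw [ht₀j] at hdm
          have h := Nat.add_lt_add_left hmod (τ * j)
          rwa [hdm] at h
        obtain ⟨k, hk1, hk2⟩ : ∃ k, k ≤ s - 1 ∧ t₀ - 1 < k + τ := ⟨τ * j, h1, h2⟩
        have hs1 : 1 ≤ s := hsIcc.1
        omega
      have hcard : (F.card : ℝ) ≤
          (((Finset.Icc 1 t₀).filter (fun s => t₀ - s < τ ∧ I s = i)).card : ℝ) := by
        exact_mod_cast Finset.card_le_card hsub
      have hchain : γ ^ τ * (F.card : ℝ) < A := by
        calc γ ^ τ * (F.card : ℝ)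
            ≤ γ ^ τ * (((Finset.Icc 1 t₀).filter (fun s => t₀ - s < τ ∧ I s = i)).card : ℝ) :=
              by nlinarith
          _ ≤ ∑ s ∈ Finset.Icc 1 t₀, γ ^ (t₀ - s) * (if I s = i then (1:ℝ) else 0) :=
              window_le hγ0 hγ1 τ i t₀ I
          _ < A := hNt₀
      rw [le_div_iff₀ hγτ]
      nlinarith
  have hQcard : (Q.card : ℝ) ≤ (M : ℝ) * (A / γ ^ τ) := by
    rw [hfib, Nat.cast_sum]
    calc (∑ j ∈ Finset.range M, ((Q.filter (fun t => (t - 1) / τ = j)).card : ℝ))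
        ≤ ∑ _j ∈ Finset.range M, (A / γ ^ τ) := Finset.sum_le_sum (fun j _ => hcj j)
      _ = (M : ℝ) * (A / γ ^ τ) := by
          rw [Finset.sum_const, Finset.card_range, nsmul_eq_mul]
  have hMceil : (M : ℤ) ≤ ⌈(T : ℝ) / τ⌉ := by
    have h : ((M : ℤ) - 1 : ℤ) < ⌈(T : ℝ) / τ⌉ := by
      rw [Int.lt_ceil]
      have hτR : (0:ℝ) < (τ : ℝ) := by exact_mod_cast hτ
      rw [lt_div_iff₀ hτR]
      have h4 : (((T - 1) / τ : ℕ) : ℝ) * (τ : ℝ) ≤ ((T - 1 : ℕ) : ℝ) := by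
        exact_mod_cast Nat.div_mul_le_self (T - 1) τ
      have h3 : ((T - 1 : ℕ) : ℝ) < (T : ℝ) := by
        exact_mod_cast (by omega : T - 1 < T)
      have e1 : (M : ℤ) - 1 = (((T - 1) / τ : ℕ) : ℤ) := by
        have : (M : ℤ) = (((T - 1) / τ : ℕ) : ℤ) + 1 := by exact_mod_cast hM
        omega
      have e : (((M : ℤ) - 1 : ℤ) : ℝ) = (((T - 1) / τ : ℕ) : ℝ) := by
        rw [e1]; norm_cast
      rw [e]
      linarith
    omega
  have hpos : (0:ℝ) ≤ A / γ ^ τ := by positivity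
  have hrhs : (⌈(T : ℝ) / τ⌉ : ℝ) * A * γ ^ (-(τ : ℤ)) = (⌈(T : ℝ) / τ⌉ : ℝ) * (A / γ ^ τ) := by
    rw [zpow_neg, zpow_natCast]
    field_simp
  rw [hrhs]
  calc (Q.card : ℝ) ≤ (M : ℝ) * (A / γ ^ τ) := hQcard
    _ ≤ (⌈(T : ℝ) / τ⌉ : ℝ) * (A / γ ^ τ) := by
        apply mul_le_mul_of_nonneg_right _ hpos
        have h : ((M : ℤ) : ℝ) ≤ ((⌈(T : ℝ) / τ⌉ : ℤ) : ℝ) := Int.cast_le.mpr hMceil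
        simpa using h
end

section
/- Let (X_t)_{t≥1} be independent random variables with values in [0,B] and means μ_t, let (F_t) be a filtration with σ(X_1,...,X_t) ⊆ F_t and X_s independent of F_t for s > t, and let (ε_t) be a {0,1}-valued previsible sequence (ε_t is F_{t-1}-measurable). Fix γ ∈ (0,1]. Define S_t(γ) = Σ_{s=1}^t γ^{t-s} X_s ε_s, M_t(γ) = Σ_{s=1}^t γ^{t-s} μ_s ε_s, and N_t(γ²) = Σ_{s=1}^t γ^{2(t-s)} ε_s. Then for every λ > 0, the process W_t^λ = exp(λγ^{-t} S_t(γ) - λγ^{-t} M_t(γ) - (B²/8) λ² γ^{-2t} N_t(γ²)) is a supermartingale with respect to (F_t), with W_0^λ = 1. -/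
open MeasureTheory ProbabilityTheory

lemma hoeff_pos {p : ℝ} (hp : p ∈ Set.Icc (0:ℝ) 1) (h : ℝ) :
    0 < 1 - p + p * Real.exp h := by
  rcases lt_or_eq_of_le hp.2 with h1 | h1
  · nlinarith [Real.exp_pos h, hp.1]
  · subst h1; simpa using Real.exp_pos h

lemma hoeff_core {p : ℝ} (hp : p ∈ Set.Icc (0:ℝ) 1) {h : ℝ} (hh : 0 ≤ h) :
    1 - p + p * Real.exp h ≤ Real.exp (p * h + h ^ 2 / 8) := by
  set Df : ℝ → ℝ := fun x => 1 - p + p * Real.exp x with hDf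
  have hD : ∀ x, 0 < Df x := fun x => hoeff_pos hp x
  set F : ℝ → ℝ := fun x => p * x + x ^ 2 / 8 - Real.log (Df x) with hF
  set f1 : ℝ → ℝ := fun x => p + x / 4 - p * Real.exp x / Df x with hf1
  have hDeriv : ∀ x, HasDerivAt Df (p * Real.exp x) x := by
    intro x
    exact ((Real.hasDerivAt_exp x).const_mul p).const_add (1 - p)
  have hF' : ∀ x, HasDerivAt F (f1 x) x := by
    intro x
    have h1 : HasDerivAt (fun x : ℝ => p * x + x ^ 2 / 8) (p + x / 4) x := by
      have := ((hasDerivAt_id x).const_mul p).add ((hasDerivAt_pow 2 x).div_const 8)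
      exact this.congr_deriv (by ring)
    have h2 : HasDerivAt (fun x => Real.log (Df x)) (p * Real.exp x / Df x) x :=
      (hDeriv x).log (hD x).ne'
    exact h1.sub h2
  have hf1' : ∀ x, HasDerivAt f1
      (1 / 4 - p * Real.exp x * (1 - p) / (Df x) ^ 2) x := by
    intro x
    have h1 : HasDerivAt (fun x : ℝ => p + x / 4) (1 / 4) x := by
      simpa using ((hasDerivAt_id x).div_const 4).const_add p
    have h2 : HasDerivAt (fun x => p * Real.exp x / Df x)
        ((p * Real.exp x * Df x - p * Real.exp x * (p * Real.exp x)) / (Df x) ^ 2) x :=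
      ((Real.hasDerivAt_exp x).const_mul p).div (hDeriv x) (hD x).ne'
    have h3 : HasDerivAt f1
        (1 / 4 - (p * Real.exp x * Df x - p * Real.exp x * (p * Real.exp x)) / (Df x) ^ 2) x :=
      h1.sub h2
    convert h3 using 1
    have hne := (hD x).ne'
    have : p * Real.exp x * (1 - p) / (Df x) ^ 2
        = (p * Real.exp x * Df x - p * Real.exp x * (p * Real.exp x)) / Df x ^ 2 := by
      congr 1
      simp only [hDf]; ring
    rw [this]
  have hf2nonneg : ∀ x, 0 ≤ 1 / 4 - p * Real.exp x * (1 - p) / (Df x) ^ 2 := by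
    intro x
    have hDx := hD x
    rw [sub_nonneg, div_le_iff₀ (by positivity)]
    simp only [hDf] at *
    nlinarith [sq_nonneg ((1 - p) - p * Real.exp x)]
  have hf1mono : Monotone f1 := by
    refine monotone_of_deriv_nonneg (fun x => (hf1' x).differentiableAt) (fun x => ?_)
    rw [(hf1' x).deriv]; exact hf2nonneg x
  have hf10 : f1 0 = 0 := by simp [hf1, hDf]
  have hf1nonneg : ∀ x ∈ interior (Set.Ici (0:ℝ)), 0 ≤ deriv F x := by
    intro x hx
    rw [(hF' x).deriv, ← hf10]
    exact hf1mono (le_of_lt (by simpa using hx))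
  have hFmono : MonotoneOn F (Set.Ici 0) :=
    monotoneOn_of_deriv_nonneg (convex_Ici 0)
      (fun x _ => (hF' x).differentiableAt.continuousAt.continuousWithinAt)
      (fun x _ => (hF' x).differentiableAt.differentiableWithinAt) hf1nonneg
  have hF0 : F 0 = 0 := by simp [hF, hDf]
  have hFh : 0 ≤ F h := by
    rw [← hF0]; exact hFmono (le_refl (0:ℝ)) hh hh
  have : Real.log (Df h) ≤ p * h + h ^ 2 / 8 := by
    simp only [hF] at hFh; linarith
  calc Df h = Real.exp (Real.log (Df h)) := (Real.exp_log (hD h)).symm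
  _ ≤ _ := Real.exp_le_exp.2 this

lemma hoeff_mgf {Ω : Type*} {m0 : MeasurableSpace Ω} (P : Measure Ω) [IsProbabilityMeasure P]
    {X : Ω → ℝ} {B : ℝ} (hB : 0 < B) (hX : AEStronglyMeasurable X P)
    (hbdd : ∀ ω, X ω ∈ Set.Icc 0 B) {c : ℝ} (hc : 0 ≤ c) :
    ∫ ω, Real.exp (c * X ω) ∂P ≤ Real.exp (c * (∫ ω, X ω ∂P) + c ^ 2 * B ^ 2 / 8) := by
  have hint : Integrable X P := by
    refine (integrable_const B).mono' hX ?_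
    filter_upwards with ω
    rw [Real.norm_eq_abs, abs_of_nonneg (hbdd ω).1]; exact (hbdd ω).2
  set μ := ∫ ω, X ω ∂P with hμ
  have hμ0 : 0 ≤ μ := integral_nonneg fun ω => (hbdd ω).1
  have hμB : μ ≤ B := by
    calc μ ≤ ∫ _, B ∂P := integral_mono hint (integrable_const B) fun ω => (hbdd ω).2
    _ = B := by simp
  set k := (Real.exp (c * B) - 1) / B with hk
  have hpt : ∀ ω, Real.exp (c * X ω) ≤ 1 + k * X ω := by
    intro ω
    have h1 := (hbdd ω).1
    have h2 := (hbdd ω).2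
    have ha : 0 ≤ 1 - X ω / B := by
      rw [sub_nonneg, div_le_one hB]; exact h2
    have hb : 0 ≤ X ω / B := div_nonneg h1 hB.le
    have hab : (1 - X ω / B) + X ω / B = 1 := by ring
    have := convexOn_exp.2 (Set.mem_univ (0:ℝ)) (Set.mem_univ (c * B)) ha hb hab
    simp only [smul_eq_mul, mul_zero, zero_add, Real.exp_zero, mul_one] at this
    have heq : X ω / B * (c * B) = c * X ω := by field_simp
    rw [heq] at this
    calc Real.exp (c * X ω) ≤ (1 - X ω / B) + X ω / B * Real.exp (c * B) := this
    _ = 1 + k * X ω := by rw [hk]; field_simp; ring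
  have hintexp : Integrable (fun ω => Real.exp (c * X ω)) P := by
    refine (integrable_const (Real.exp (c * B))).mono'
      (Real.continuous_exp.comp_aestronglyMeasurable (hX.const_mul c)) ?_
    filter_upwards with ω
    rw [Real.norm_eq_abs, abs_of_nonneg (Real.exp_pos _).le, Real.exp_le_exp]
    exact mul_le_mul_of_nonneg_left (hbdd ω).2 hc
  have hintrhs : Integrable (fun ω => 1 + k * X ω) P :=
    (integrable_const 1).add (hint.const_mul k)
  have step1 : ∫ ω, Real.exp (c * X ω) ∂P ≤ 1 + k * μ := by
    calc ∫ ω, Real.exp (c * X ω) ∂P ≤ ∫ ω, 1 + k * X ω ∂P :=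
      integral_mono hintexp hintrhs hpt
    _ = 1 + k * μ := by
      rw [integral_add (integrable_const 1) (hint.const_mul k), MeasureTheory.integral_const_mul]
      simp [hμ]
  set p := μ / B with hp
  have hpmem : p ∈ Set.Icc (0:ℝ) 1 := by
    constructor
    · exact div_nonneg hμ0 hB.le
    · rw [div_le_one hB]; exact hμB
  have step2 : (1:ℝ) + k * μ = 1 - p + p * Real.exp (c * B) := by
    rw [hk, hp]; field_simp; ring
  have step3 := hoeff_core hpmem (mul_nonneg hc hB.le)
  have step4 : p * (c * B) + (c * B) ^ 2 / 8 = c * μ + c ^ 2 * B ^ 2 / 8 := by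
    rw [hp]; field_simp
  rw [step4] at step3
  linarith [step1, step2 ▸ step3]

lemma intBdd {Ω : Type*} {m0 : MeasurableSpace Ω} (P : Measure Ω) [IsProbabilityMeasure P]
    {f : Ω → ℝ} (hf : AEStronglyMeasurable f P) {C : ℝ} (h : ∀ ω, ‖f ω‖ ≤ C) :
    Integrable f P :=
  (integrable_const C).mono' hf (Filter.Eventually.of_forall h)

theorem stmt_8 {Ω : Type*} {m0 : MeasurableSpace Ω} (P : Measure Ω) [IsProbabilityMeasure P]
    (F : Filtration ℕ m0) (B : ℝ) (hB : 0 < B)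
    (X : ℕ → Ω → ℝ) (μ : ℕ → ℝ) (ε : ℕ → Ω → ℝ)
    (hXmeas : ∀ s t : ℕ, s ≤ t → StronglyMeasurable[F t] (X s))
    (hXindep : ∀ s t : ℕ, t < s →
      Indep (MeasurableSpace.comap (X s) inferInstance) (F t) P)
    (hXbdd : ∀ t ω, X t ω ∈ Set.Icc 0 B)
    (hXmean : ∀ t, ∫ ω, X t ω ∂P = μ t)
    (hεval : ∀ t ω, ε t ω = 0 ∨ ε t ω = 1)
    (hεmeas : ∀ t : ℕ, StronglyMeasurable[F (t - 1)] (ε t))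
    (γ l : ℝ) (hγ : γ ∈ Set.Ioc (0:ℝ) 1) (hl : 0 < l) :
    Supermartingale
      (fun (t : ℕ) (ω : Ω) => Real.exp
        (l * γ ^ (-(t : ℤ)) * (∑ s ∈ Finset.Icc 1 t, γ ^ ((t - s : ℕ)) * X s ω * ε s ω)
          - l * γ ^ (-(t : ℤ)) * (∑ s ∈ Finset.Icc 1 t, γ ^ ((t - s : ℕ)) * μ s * ε s ω)
          - B ^ 2 / 8 * l ^ 2 * γ ^ (-(2 * t : ℤ)) *
              (∑ s ∈ Finset.Icc 1 t, γ ^ ((2 * (t - s) : ℕ)) * ε s ω))) F P ∧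
    (fun ω => Real.exp
        (l * γ ^ (-(0 : ℤ)) * (∑ s ∈ Finset.Icc 1 0, γ ^ ((0 - s : ℕ)) * X s ω * ε s ω)
          - l * γ ^ (-(0 : ℤ)) * (∑ s ∈ Finset.Icc 1 0, γ ^ ((0 - s : ℕ)) * μ s * ε s ω)
          - B ^ 2 / 8 * l ^ 2 * γ ^ (-(2 * 0 : ℤ)) *
              (∑ s ∈ Finset.Icc 1 0, γ ^ ((2 * (0 - s) : ℕ)) * ε s ω))) = fun _ => (1:ℝ) := by
  obtain ⟨hγ0, hγ1⟩ := hγ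
  have hγne : γ ≠ 0 := ne_of_gt hγ0
  -- basic facts
  have hε01 : ∀ s ω, 0 ≤ ε s ω ∧ ε s ω ≤ 1 := by
    intro s ω; rcases hεval s ω with h | h <;> simp [h]
  have hXsm0 : ∀ s, StronglyMeasurable (X s) :=
    fun s => (hXmeas s s le_rfl).mono (F.le s)
  have hμnn : ∀ s, 0 ≤ μ s := by
    intro s
    rw [← hXmean s]
    exact integral_nonneg fun ω => (hXbdd s ω).1
  -- the increment process
  set a : ℕ → Ω → ℝ := fun s ω =>
    l * γ ^ (-(s : ℤ)) * X s ω * ε s ω - l * γ ^ (-(s : ℤ)) * μ s * ε s ω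
      - B ^ 2 / 8 * l ^ 2 * γ ^ (-(2 * (s : ℤ))) * ε s ω with ha
  -- rewrite the process
  have hfe : (fun (t : ℕ) (ω : Ω) => Real.exp
        (l * γ ^ (-(t : ℤ)) * (∑ s ∈ Finset.Icc 1 t, γ ^ ((t - s : ℕ)) * X s ω * ε s ω)
          - l * γ ^ (-(t : ℤ)) * (∑ s ∈ Finset.Icc 1 t, γ ^ ((t - s : ℕ)) * μ s * ε s ω)
          - B ^ 2 / 8 * l ^ 2 * γ ^ (-(2 * t : ℤ)) *
              (∑ s ∈ Finset.Icc 1 t, γ ^ ((2 * (t - s) : ℕ)) * ε s ω)))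
      = fun (t : ℕ) (ω : Ω) => Real.exp (∑ s ∈ Finset.Icc 1 t, a s ω) := by
    funext t ω
    congr 1
    rw [Finset.mul_sum, Finset.mul_sum, Finset.mul_sum, ← Finset.sum_sub_distrib,
      ← Finset.sum_sub_distrib]
    refine Finset.sum_congr rfl fun s hs => ?_
    have hst : s ≤ t := (Finset.mem_Icc.1 hs).2
    have e1 : γ ^ (-(t : ℤ)) * γ ^ ((t - s : ℕ)) = γ ^ (-(s : ℤ)) := by
      rw [← zpow_natCast γ (t - s), ← zpow_add₀ hγne]
      congr 1
      omega
    have e2 : γ ^ (-(2 * t : ℤ)) * γ ^ ((2 * (t - s) : ℕ)) = γ ^ (-(2 * (s : ℤ))) := by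
      rw [← zpow_natCast γ (2 * (t - s)), ← zpow_add₀ hγne]
      congr 1
      omega
    simp only [ha]
    linear_combination (l * X s ω * ε s ω - l * μ s * ε s ω) * e1
      - (B ^ 2 / 8 * l ^ 2 * ε s ω) * e2
  rw [hfe]
  set W : ℕ → Ω → ℝ := fun t ω => Real.exp (∑ s ∈ Finset.Icc 1 t, a s ω) with hW
  -- measurability
  have haSM : ∀ s t : ℕ, s ≤ t → StronglyMeasurable[F t] (a s) := by
    intro s t hst
    have hX' : StronglyMeasurable[F t] (X s) := hXmeas s t hst
    have hε' : StronglyMeasurable[F t] (ε s) :=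
      (hεmeas s).mono (F.mono (le_trans (Nat.sub_le s 1) hst))
    exact (((stronglyMeasurable_const.mul hX').mul hε').sub
      (stronglyMeasurable_const.mul hε')).sub (stronglyMeasurable_const.mul hε')
  have hWSM : ∀ t, StronglyMeasurable[F t] (W t) := by
    intro t
    refine Real.continuous_exp.comp_stronglyMeasurable ?_
    exact Finset.stronglyMeasurable_fun_sum _ fun s hs => haSM s t (Finset.mem_Icc.1 hs).2
  -- bounds
  set bnd : ℕ → ℝ := fun s => l * γ ^ (-(s : ℤ)) * B with hbnd
  have hab : ∀ s ω, a s ω ≤ bnd s := by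
    intro s ω
    have hXe : X s ω * ε s ω ≤ B := by
      rcases hεval s ω with h | h
      · simp [h, hB.le]
      · simp [h]; exact (hXbdd s ω).2
    have hpos : (0:ℝ) ≤ l * γ ^ (-(s : ℤ)) := by positivity
    have t1 : l * γ ^ (-(s : ℤ)) * X s ω * ε s ω ≤ l * γ ^ (-(s : ℤ)) * B := by
      nlinarith [mul_le_mul_of_nonneg_left hXe hpos]
    have t2 : 0 ≤ l * γ ^ (-(s : ℤ)) * μ s * ε s ω := by
      have := hμnn s; have := (hε01 s ω).1; positivity
    have t3 : 0 ≤ B ^ 2 / 8 * l ^ 2 * γ ^ (-(2 * (s : ℤ))) * ε s ω := by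
      have := (hε01 s ω).1; positivity
    simp only [ha, hbnd]
    linarith
  have hWpos : ∀ t ω, 0 < W t ω := fun t ω => Real.exp_pos _
  have hWle : ∀ t ω, W t ω ≤ Real.exp (∑ s ∈ Finset.Icc 1 t, bnd s) := by
    intro t ω
    exact Real.exp_le_exp.2 (Finset.sum_le_sum fun s _ => hab s ω)
  have hWint : ∀ t, Integrable (W t) P := by
    intro t
    refine intBdd P ((hWSM t).mono (F.le t)).aestronglyMeasurable (C := Real.exp (∑ s ∈ Finset.Icc 1 t, bnd s)) fun ω => ?_
    rw [Real.norm_eq_abs, abs_of_nonneg (hWpos t ω).le]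
    exact hWle t ω
  constructor
  · -- supermartingale
    refine supermartingale_nat (fun t => hWSM t) hWint ?_
    intro i
    -- decomposition
    set c : ℝ := l * γ ^ (-((i + 1 : ℕ) : ℤ)) with hc
    set d : ℝ := B ^ 2 / 8 * l ^ 2 * γ ^ (-(2 * ((i + 1 : ℕ) : ℤ))) with hd
    have hcpos : 0 < c := by positivity
    set k : ℝ := Real.exp (-(c * μ (i + 1)) - d) with hk
    set g : Ω → ℝ := fun ω => Real.exp (c * X (i + 1) ω) with hg
    set f1 : Ω → ℝ := fun ω => W i ω * (1 - ε (i + 1) ω) with hf1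
    set f2 : Ω → ℝ := fun ω => W i ω * ε (i + 1) ω * k with hf2
    have hW1 : W (i + 1) = f1 + f2 * g := by
      funext ω
      simp only [hW, hf1, hf2, hg, Pi.add_apply, Pi.mul_apply]
      rw [Finset.sum_Icc_succ_top (by omega : 1 ≤ i + 1), Real.exp_add]
      rcases hεval (i + 1) ω with h | h
      · have hterm0 : a (i + 1) ω = 0 := by
          simp only [ha]; rw [h]; ring
        rw [hterm0, Real.exp_zero, h]
        ring
      · have hterm : a (i + 1) ω = c * X (i + 1) ω + (-(c * μ (i + 1)) - d) := by
          simp only [ha, hc, hd]; rw [h]; ring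
        rw [hterm, Real.exp_add, h]
        simp only [hk]
        ring
    -- measurability / integrability of pieces
    have hε' : StronglyMeasurable[F i] (ε (i + 1)) := by
      have := hεmeas (i + 1)
      simpa using this
    have hf1SM : StronglyMeasurable[F i] f1 :=
      (hWSM i).mul (stronglyMeasurable_const.sub hε')
    have hf2SM : StronglyMeasurable[F i] f2 :=
      ((hWSM i).mul hε').mul stronglyMeasurable_const
    have hCi : ∀ ω, W i ω ≤ Real.exp (∑ s ∈ Finset.Icc 1 i, bnd s) := hWle i
    set Ci : ℝ := Real.exp (∑ s ∈ Finset.Icc 1 i, bnd s) with hCi'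
    have hCipos : 0 < Ci := Real.exp_pos _
    have hgbd : ∀ ω, g ω ≤ Real.exp (c * B) := by
      intro ω
      exact Real.exp_le_exp.2 (mul_le_mul_of_nonneg_left (hXbdd (i+1) ω).2 hcpos.le)
    have hgSM0 : StronglyMeasurable g :=
      Real.continuous_exp.comp_stronglyMeasurable ((hXsm0 (i+1)).const_mul c)
    have hgint : Integrable g P := by
      refine intBdd P hgSM0.aestronglyMeasurable (C := Real.exp (c * B)) fun ω => ?_
      rw [Real.norm_eq_abs, abs_of_nonneg (Real.exp_pos _).le]
      exact hgbd ω
    have hf1int : Integrable f1 P := by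
      refine intBdd P ((hf1SM.mono (F.le i)).aestronglyMeasurable) (C := Ci) fun ω => ?_
      rw [Real.norm_eq_abs, abs_le]
      have h1 := (hε01 (i+1) ω).1
      have h2 := (hε01 (i+1) ω).2
      have h3 := (hWpos i ω).le
      have h4 := hCi ω
      constructor
      · simp only [hf1]; nlinarith
      · simp only [hf1]; nlinarith
    have hkpos : 0 < k := Real.exp_pos _
    have hf2g_int : Integrable (f2 * g) P := by
      refine intBdd P (((hf2SM.mono (F.le i)).mul hgSM0).aestronglyMeasurable)
        (C := Ci * k * Real.exp (c * B)) fun ω => ?_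
      rw [Pi.mul_apply, Real.norm_eq_abs]
      have h1 := (hε01 (i+1) ω).1
      have h2 := (hε01 (i+1) ω).2
      have h3 := (hWpos i ω).le
      have h4 := hCi ω
      have h5 : 0 ≤ g ω := (Real.exp_pos _).le
      have h6 := hgbd ω
      rw [abs_of_nonneg (by simp only [hf2]; positivity)]
      simp only [hf2]
      have hWe : W i ω * ε (i + 1) ω ≤ Ci := by
        calc W i ω * ε (i + 1) ω ≤ W i ω * 1 := mul_le_mul_of_nonneg_left h2 h3
        _ = W i ω := mul_one _
        _ ≤ Ci := h4
      calc W i ω * ε (i + 1) ω * k * g ω ≤ Ci * k * g ω :=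
        mul_le_mul_of_nonneg_right (mul_le_mul_of_nonneg_right hWe hkpos.le) h5
      _ ≤ Ci * k * Real.exp (c * B) := mul_le_mul_of_nonneg_left h6 (by positivity)
    -- condexp computation
    have hcomaple : MeasurableSpace.comap (X (i + 1)) inferInstance ≤ m0 :=
      measurable_iff_comap_le.1 (hXsm0 (i+1)).measurable
    have hgSMc : StronglyMeasurable[MeasurableSpace.comap (X (i + 1)) inferInstance] g := by
      refine (Real.measurable_exp.comp ?_).stronglyMeasurable
      exact (Measurable.of_comap_le le_rfl).const_mul c
    have hcond_g : P[g | F i] =ᵐ[P] fun _ => ∫ ω, g ω ∂P :=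
      condExp_indep_eq hcomaple (F.le i) hgSMc (hXindep (i + 1) i (Nat.lt_succ_self i))
    have hcond_f1 : P[f1 | F i] = f1 :=
      condExp_of_stronglyMeasurable (F.le i) hf1SM hf1int
    have hcond_mul : P[f2 * g | F i] =ᵐ[P] f2 * P[g | F i] :=
      condExp_mul_of_stronglyMeasurable_left hf2SM hf2g_int hgint
    have hcond_add : P[f1 + f2 * g | F i] =ᵐ[P] P[f1 | F i] + P[f2 * g | F i] :=
      condExp_add hf1int hf2g_int _
    -- the Hoeffding bound
    have hIg : ∫ ω, g ω ∂P ≤ Real.exp (c * μ (i + 1) + c ^ 2 * B ^ 2 / 8) := by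
      have := hoeff_mgf P hB (hXsm0 (i+1)).aestronglyMeasurable (hXbdd (i+1)) hcpos.le
      rwa [hXmean (i+1)] at this
    have hccd : c ^ 2 * B ^ 2 / 8 = d := by
      have hcc : γ ^ (-((i + 1 : ℕ) : ℤ)) * γ ^ (-((i + 1 : ℕ) : ℤ))
          = γ ^ (-(2 * ((i + 1 : ℕ) : ℤ))) := by
        rw [← zpow_add₀ hγne]
        congr 1
        ring
      simp only [hc, hd]
      linear_combination (l ^ 2 * B ^ 2 / 8) * hcc
    have hkE : k * Real.exp (c * μ (i + 1) + c ^ 2 * B ^ 2 / 8) = 1 := by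
      rw [hk, ← Real.exp_add, show -(c * μ (i + 1)) - d + (c * μ (i + 1) + c ^ 2 * B ^ 2 / 8)
        = c ^ 2 * B ^ 2 / 8 - d by ring, hccd, sub_self, Real.exp_zero]
    -- conclude
    rw [hW1]
    filter_upwards [hcond_add, hcond_mul, hcond_g] with ω h1 h2 h3
    rw [h1]
    simp only [Pi.add_apply, hcond_f1]
    rw [h2]
    simp only [Pi.mul_apply]
    rw [h3]
    have hf2nn : 0 ≤ f2 ω := by
      have := (hε01 (i+1) ω).1
      have := (hWpos i ω).le
      simp only [hf2]; positivity
    have hb1 : f2 ω * (∫ ω, g ω ∂P) ≤ f2 ω * Real.exp (c * μ (i + 1) + c ^ 2 * B ^ 2 / 8) :=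
      mul_le_mul_of_nonneg_left hIg hf2nn
    have hb2 : f2 ω * Real.exp (c * μ (i + 1) + c ^ 2 * B ^ 2 / 8) = W i ω * ε (i + 1) ω := by
      simp only [hf2]
      linear_combination (W i ω * ε (i + 1) ω) * hkE
    have : f1 ω + W i ω * ε (i + 1) ω = W i ω := by
      simp only [hf1]; ring
    linarith
  · -- value at 0
    funext ω
    simp
end

section
/- With the notation of the discounted supermartingale construction (independent [0,B]-valued X_t with means μ_t, previsible Bernoulli ε_t, γ ∈ (0,1], S_t(γ) = Σ γ^{t-s}X_s ε_s, M_t(γ) = Σ γ^{t-s}μ_s ε_s, N_t(γ²) = Σ γ^{2(t-s)}ε_s), for every λ > 0 and every t ≥ 1, E[exp(λ(S_t(γ) - M_t(γ)) - (B²/8)λ² N_t(γ²))] ≤ 1. -/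
open MeasureTheory ProbabilityTheory Real


lemma aux_core {p h : ℝ} (hp0 : 0 ≤ p) (hp1 : p ≤ 1) (hh : 0 ≤ h) :
    1 - p + p * Real.exp h ≤ Real.exp (p * h + h ^ 2 / 8) := by
  have hD : ∀ x : ℝ, 0 < 1 - p + p * Real.exp x := by
    intro x
    rcases eq_or_lt_of_le hp0 with h0 | h0
    · simp [← h0]
    · have := exp_pos x
      nlinarith
  -- derivative of g1
  set g1 : ℝ → ℝ := fun x => p + x / 4 - p * Real.exp x / (1 - p + p * Real.exp x) with hg1def
  have hg1' : ∀ x : ℝ, HasDerivAt g1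
      (1 / 4 - p * Real.exp x * (1 - p) / (1 - p + p * Real.exp x) ^ 2) x := by
    intro x
    have hDx : HasDerivAt (fun x : ℝ => 1 - p + p * Real.exp x) (p * Real.exp x) x :=
      ((Real.hasDerivAt_exp x).const_mul p).const_add (1 - p)
    have hNx : HasDerivAt (fun x : ℝ => p * Real.exp x) (p * Real.exp x) x :=
      (Real.hasDerivAt_exp x).const_mul p
    have hq := hNx.div hDx (hD x).ne'
    have hlin : HasDerivAt (fun x : ℝ => p + x / 4) (1 / 4) x := by
      simpa using ((hasDerivAt_id x).div_const 4).const_add p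
    have := hlin.sub hq
    refine this.congr_deriv ?_
    have := (hD x).ne'
    field_simp
    ring
  have hg1nonneg : ∀ x : ℝ, 0 ≤ x → 0 ≤ g1 x := by
    have hmono : Monotone g1 := by
      apply monotone_of_deriv_nonneg
      · exact fun x => (hg1' x).differentiableAt
      · intro x
        rw [(hg1' x).deriv]
        have hD2 : p * Real.exp x * (1 - p) / (1 - p + p * Real.exp x) ^ 2 ≤ 1 / 4 := by
          rw [div_le_iff₀ (pow_pos (hD x) 2)]
          nlinarith [sq_nonneg (1 - p - p * Real.exp x), exp_pos x]
        linarith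
    intro x hx
    have h0 : g1 0 = 0 := by
      simp [hg1def]
    calc (0:ℝ) = g1 0 := h0.symm
      _ ≤ g1 x := hmono hx
  -- g
  set g : ℝ → ℝ := fun x => p * x + x ^ 2 / 8 - Real.log (1 - p + p * Real.exp x) with hgdef
  have hg' : ∀ x : ℝ, HasDerivAt g (g1 x) x := by
    intro x
    have hDx : HasDerivAt (fun x : ℝ => 1 - p + p * Real.exp x) (p * Real.exp x) x :=
      ((Real.hasDerivAt_exp x).const_mul p).const_add (1 - p)
    have hlog := hDx.log (hD x).ne'
    have hpoly : HasDerivAt (fun x : ℝ => p * x + x ^ 2 / 8) (p + x / 4) x := by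
      have h1 : HasDerivAt (fun x : ℝ => p * x) p x := by
        simpa using (hasDerivAt_id x).const_mul p
      have h2 : HasDerivAt (fun x : ℝ => x ^ 2 / 8) (x / 4) x := by
        have := (hasDerivAt_pow 2 x).div_const 8
        refine this.congr_deriv ?_
        norm_num; ring
      exact h1.add h2
    have := hpoly.sub hlog
    exact this
  have hgmono : MonotoneOn g (Set.Ici 0) := by
    apply monotoneOn_of_deriv_nonneg (convex_Ici 0)
    · exact (Differentiable.continuous fun x => (hg' x).differentiableAt).continuousOn
    · exact fun x _ => ((hg' x).differentiableAt).differentiableWithinAt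
    · intro x hx
      rw [interior_Ici] at hx
      rw [(hg' x).deriv]
      exact hg1nonneg x hx.le
  have hg0 : g 0 = 0 := by simp [hgdef]
  have hgh : 0 ≤ g h := by
    calc (0:ℝ) = g 0 := hg0.symm
      _ ≤ g h := hgmono (by simp) (by simpa using hh) hh
  have hlog : Real.log (1 - p + p * Real.exp h) ≤ p * h + h ^ 2 / 8 := by
    simp only [hgdef] at hgh; linarith
  calc 1 - p + p * Real.exp h = Real.exp (Real.log (1 - p + p * Real.exp h)) :=
        (Real.exp_log (hD h)).symm
    _ ≤ Real.exp (p * h + h ^ 2 / 8) := Real.exp_le_exp.mpr hlog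


lemma aux_hoeffding {Ω : Type*} {m0 : MeasurableSpace Ω} (P : Measure Ω) [IsProbabilityMeasure P]
    {B : ℝ} (hB : 0 < B) (Y : Ω → ℝ) (hY : AEStronglyMeasurable Y P)
    (hbdd : ∀ ω, Y ω ∈ Set.Icc 0 B) {c : ℝ} (hc : 0 ≤ c) :
    ∫ ω, Real.exp (c * (Y ω - ∫ ω', Y ω' ∂P)) ∂P ≤ Real.exp (B ^ 2 / 8 * c ^ 2) := by
  set μ := ∫ ω', Y ω' ∂P with hμ
  have hYint : Integrable Y P := by
    refine Integrable.mono' (integrable_const B) hY ?_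
    filter_upwards with ω
    have := hbdd ω
    rw [Real.norm_eq_abs, abs_le]
    constructor <;> [linarith [this.1]; exact this.2]
  have hμ0 : 0 ≤ μ := integral_nonneg fun ω => (hbdd ω).1
  have hμB : μ ≤ B := by
    calc μ ≤ ∫ _ω, B ∂P := integral_mono hYint (integrable_const B) fun ω => (hbdd ω).2
      _ = B := by simp
  -- convexity bound pointwise
  have hconv : ∀ ω, Real.exp (c * Y ω) ≤ 1 - Y ω / B + Y ω / B * Real.exp (c * B) := by
    intro ω
    have h0B := hbdd ω
    have ha : (0:ℝ) ≤ 1 - Y ω / B := by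
      rw [sub_nonneg, div_le_one hB]; exact h0B.2
    have hb : (0:ℝ) ≤ Y ω / B := div_nonneg h0B.1 hB.le
    have hab : (1 - Y ω / B) + Y ω / B = 1 := by ring
    have := convexOn_exp.2 (Set.mem_univ (0:ℝ)) (Set.mem_univ (c * B)) ha hb hab
    simp only [smul_eq_mul, mul_zero, zero_add, Real.exp_zero, mul_one] at this
    have harg : Y ω / B * (c * B) = c * Y ω := by field_simp
    rw [harg] at this
    linarith
  -- integrability of exponentials
  have hexpint : Integrable (fun ω => Real.exp (c * Y ω)) P := by
    refine Integrable.mono' (integrable_const (Real.exp (c * B)))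
      (Real.continuous_exp.comp_aestronglyMeasurable (hY.const_mul c)) ?_
    filter_upwards with ω
    rw [Real.norm_eq_abs, abs_of_pos (Real.exp_pos _)]
    exact Real.exp_le_exp.mpr (mul_le_mul_of_nonneg_left (hbdd ω).2 hc)
  have hint2 : Integrable (fun ω => 1 - Y ω / B + Y ω / B * Real.exp (c * B)) P := by
    apply Integrable.add
    · exact (integrable_const 1).sub (hYint.div_const B)
    · exact (hYint.div_const B).mul_const _
  have hstep1 : ∫ ω, Real.exp (c * Y ω) ∂P ≤ 1 - μ / B + μ / B * Real.exp (c * B) := by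
    calc ∫ ω, Real.exp (c * Y ω) ∂P
        ≤ ∫ ω, (1 - Y ω / B + Y ω / B * Real.exp (c * B)) ∂P :=
          integral_mono hexpint hint2 hconv
      _ = ∫ ω, (1 + (Real.exp (c * B) - 1) / B * Y ω) ∂P := by
          apply integral_congr_ae
          filter_upwards with ω
          field_simp
          ring
      _ = 1 + (Real.exp (c * B) - 1) / B * μ := by
          rw [integral_add (integrable_const 1) (hYint.const_mul _), integral_const_mul]
          simp [hμ]
      _ = 1 - μ / B + μ / B * Real.exp (c * B) := by field_simp; ring
  have hkey := aux_core (p := μ / B) (h := c * B) (div_nonneg hμ0 hB.le)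
    ((div_le_one hB).mpr hμB) (mul_nonneg hc hB.le)
  have hfinal : ∫ ω, Real.exp (c * (Y ω - μ)) ∂P
      = Real.exp (-(c * μ)) * ∫ ω, Real.exp (c * Y ω) ∂P := by
    rw [← integral_const_mul]
    congr 1
    ext ω
    rw [← Real.exp_add]
    ring_nf
  rw [hfinal]
  calc Real.exp (-(c * μ)) * ∫ ω, Real.exp (c * Y ω) ∂P
      ≤ Real.exp (-(c * μ)) * (1 - μ / B + μ / B * Real.exp (c * B)) := by
        apply mul_le_mul_of_nonneg_left hstep1 (Real.exp_pos _).le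
    _ ≤ Real.exp (-(c * μ)) * Real.exp (μ / B * (c * B) + (c * B) ^ 2 / 8) :=
        mul_le_mul_of_nonneg_left hkey (Real.exp_pos _).le
    _ = Real.exp (B ^ 2 / 8 * c ^ 2) := by
        rw [← Real.exp_add]
        congr 1
        field_simp
        ring


set_option maxHeartbeats 1000000 in
theorem stmt_9 {Ω : Type*} {m0 : MeasurableSpace Ω} (P : Measure Ω) [IsProbabilityMeasure P]
    (F : Filtration ℕ m0) (B : ℝ) (hB : 0 < B)
    (X : ℕ → Ω → ℝ) (μ : ℕ → ℝ) (ε : ℕ → Ω → ℝ)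
    (hXmeas : ∀ s t : ℕ, s ≤ t → StronglyMeasurable[F t] (X s))
    (hXindep : ∀ s t : ℕ, t < s →
      Indep (MeasurableSpace.comap (X s) inferInstance) (F t) P)
    (hXbdd : ∀ t ω, X t ω ∈ Set.Icc 0 B)
    (hXmean : ∀ t, ∫ ω, X t ω ∂P = μ t)
    (hεval : ∀ t ω, ε t ω = 0 ∨ ε t ω = 1)
    (hεmeas : ∀ t : ℕ, StronglyMeasurable[F (t - 1)] (ε t))
    (γ : ℝ) (hγ : γ ∈ Set.Ioc (0:ℝ) 1)
    (l : ℝ) (hl : 0 < l) (t : ℕ) (ht : 1 ≤ t) :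
    (∫ ω, Real.exp
        (l * ((∑ s ∈ Finset.Icc 1 t, γ ^ ((t - s : ℕ)) * X s ω * ε s ω)
            - ∑ s ∈ Finset.Icc 1 t, γ ^ ((t - s : ℕ)) * μ s * ε s ω)
          - B ^ 2 / 8 * l ^ 2 * ∑ s ∈ Finset.Icc 1 t, γ ^ ((2 * (t - s) : ℕ)) * ε s ω) ∂P) ≤ 1 := by
  obtain ⟨hγ0, hγ1⟩ := hγ
  have hXsm : ∀ s, AEStronglyMeasurable (X s) P :=
    fun s => ((hXmeas s s le_rfl).mono (F.le s)).aestronglyMeasurable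
  have hXint : ∀ s, Integrable (X s) P := by
    intro s
    refine Integrable.mono' (integrable_const B) (hXsm s) ?_
    filter_upwards with ω
    have h := hXbdd s ω
    rw [Real.norm_eq_abs, abs_le]
    exact ⟨by linarith [h.1], h.2⟩
  have hμ0 : ∀ s, 0 ≤ μ s := by
    intro s
    rw [← hXmean s]
    exact integral_nonneg fun ω => (hXbdd s ω).1
  have hμB : ∀ s, μ s ≤ B := by
    intro s
    rw [← hXmean s]
    calc ∫ ω, X s ω ∂P ≤ ∫ _ω, B ∂P :=
          integral_mono (hXint s) (integrable_const B) fun ω => (hXbdd s ω).2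
      _ = B := by simp
  have hε01 : ∀ s ω, 0 ≤ ε s ω ∧ ε s ω ≤ 1 := by
    intro s ω
    rcases hεval s ω with h | h <;> rw [h] <;> norm_num
  -- key induction
  have key : ∀ n : ℕ, ∀ l : ℝ, 0 < l →
      (∫ ω, Real.exp (∑ s ∈ Finset.Icc 1 n,
        (l * γ ^ (n - s) * ε s ω * (X s ω - μ s)
          - B ^ 2 / 8 * l ^ 2 * γ ^ (2 * (n - s)) * ε s ω)) ∂P) ≤ 1 := by
    intro n
    induction n with
    | zero =>
      intro l _
      rw [show Finset.Icc 1 0 = (∅ : Finset ℕ) from rfl]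
      simp
    | succ n ih =>
      intro l hl
      have hL : 0 < l * γ := mul_pos hl hγ0
      set G : Ω → ℝ := fun ω => ∑ s ∈ Finset.Icc 1 n,
        ((l * γ) * γ ^ (n - s) * ε s ω * (X s ω - μ s)
          - B ^ 2 / 8 * (l * γ) ^ 2 * γ ^ (2 * (n - s)) * ε s ω) with hGdef
      set W : Ω → ℝ := fun ω => Real.exp (G ω) with hWdef
      set A : Set Ω := {ω | ε (n + 1) ω = 1} with hAdef
      set g : Ω → ℝ := fun ω => Real.exp (l * (X (n + 1) ω - μ (n + 1))) with hgdef
      -- pointwise decomposition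
      have hpt : ∀ ω, Real.exp (∑ s ∈ Finset.Icc 1 (n + 1),
          (l * γ ^ (n + 1 - s) * ε s ω * (X s ω - μ s)
            - B ^ 2 / 8 * l ^ 2 * γ ^ (2 * (n + 1 - s)) * ε s ω))
          = Aᶜ.indicator W ω
            + Real.exp (-(B ^ 2 / 8 * l ^ 2)) * (A.indicator W ω * g ω) := by
        intro ω
        rw [Finset.sum_Icc_succ_top (Nat.le_add_left 1 n)]
        have hsum : ∑ s ∈ Finset.Icc 1 n,
            (l * γ ^ (n + 1 - s) * ε s ω * (X s ω - μ s)
              - B ^ 2 / 8 * l ^ 2 * γ ^ (2 * (n + 1 - s)) * ε s ω) = G ω := by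
          refine Finset.sum_congr rfl fun s hs => ?_
          have hsn : s ≤ n := (Finset.mem_Icc.mp hs).2
          have h1 : n + 1 - s = (n - s) + 1 := by omega
          have h2 : 2 * (n + 1 - s) = 2 * (n - s) + 2 := by omega
          rw [h2, h1, pow_add, pow_add]
          ring
        rw [hsum, Real.exp_add]
        have hlast : n + 1 - (n + 1) = 0 := by omega
        rw [hlast]
        rcases hεval (n + 1) ω with h0 | h1
        · have hA : ω ∉ A := by simp [hAdef, h0]
          rw [Set.indicator_of_mem (Set.mem_compl hA) W, Set.indicator_of_notMem hA W]
          rw [h0]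
          norm_num [hWdef]
        · have hA : ω ∈ A := by simp [hAdef, h1]
          rw [Set.indicator_of_notMem (by simpa using hA) W, Set.indicator_of_mem hA W]
          rw [h1]
          rw [hWdef, hgdef]
          simp only [← Real.exp_add]
          norm_num
          ring_nf
      -- measurability
      have hWsm : StronglyMeasurable[F n] W := by
        refine Real.continuous_exp.comp_stronglyMeasurable ?_
        refine Finset.stronglyMeasurable_fun_sum _ fun s hs => ?_
        have hsn : s ≤ n := (Finset.mem_Icc.mp hs).2
        have hεs : StronglyMeasurable[F n] (ε s) := (hεmeas s).mono (F.mono (by omega))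
        have hXs : StronglyMeasurable[F n] (X s) := hXmeas s n hsn
        exact ((hεs.const_mul _).mul (hXs.sub stronglyMeasurable_const)).sub
          (hεs.const_mul _)
      have hεn1 : StronglyMeasurable[F n] (ε (n + 1)) := by
        have := hεmeas (n + 1)
        simpa using this
      have hAmeas : MeasurableSet[F n] A :=
        hεn1.measurable (measurableSet_singleton (1 : ℝ))
      have hAm0 : MeasurableSet A := F.le n _ hAmeas
      -- bounds
      have hWpos : ∀ ω, 0 < W ω := fun ω => Real.exp_pos _
      have hGbdd : ∀ ω, G ω ≤ n * (l * γ * B) := by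
        intro ω
        have : ∀ s ∈ Finset.Icc 1 n,
            (l * γ) * γ ^ (n - s) * ε s ω * (X s ω - μ s)
              - B ^ 2 / 8 * (l * γ) ^ 2 * γ ^ (2 * (n - s)) * ε s ω ≤ l * γ * B := by
          intro s hs
          have hq1 : (0:ℝ) < γ ^ (n - s) := pow_pos hγ0 _
          have hq2 : γ ^ (n - s) ≤ 1 := pow_le_one₀ hγ0.le hγ1
          have hr1 : (0:ℝ) < γ ^ (2 * (n - s)) := pow_pos hγ0 _
          have he := hε01 s ω
          have hx := hXbdd s ω
          have hμs0 := hμ0 s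
          have hμsB := hμB s
          have he1 := he.1
          have hc2 : (0:ℝ) ≤ B ^ 2 / 8 * (l * γ) ^ 2 * γ ^ (2 * (n - s)) * ε s ω := by
            positivity
          have hqe1 : γ ^ (n - s) * ε s ω ≤ 1 := mul_le_one₀ hq2 he.1 he.2
          have hxb : X s ω - μ s ≤ B := by linarith [hx.2]
          have ha0 : 0 ≤ l * γ * γ ^ (n - s) * ε s ω := by positivity
          have h5 : l * γ * γ ^ (n - s) * ε s ω * (X s ω - μ s) ≤ l * γ * B := by
            calc l * γ * γ ^ (n - s) * ε s ω * (X s ω - μ s)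
                ≤ l * γ * γ ^ (n - s) * ε s ω * B := mul_le_mul_of_nonneg_left hxb ha0
              _ = l * γ * (γ ^ (n - s) * ε s ω) * B := by ring
              _ ≤ l * γ * 1 * B := by
                  refine mul_le_mul_of_nonneg_right ?_ hB.le
                  exact mul_le_mul_of_nonneg_left hqe1 hL.le
              _ = l * γ * B := by ring
          linarith
        calc G ω ≤ ∑ _s ∈ Finset.Icc 1 n, (l * γ * B) := Finset.sum_le_sum this
          _ = n * (l * γ * B) := by
            rw [Finset.sum_const, Nat.card_Icc, nsmul_eq_mul]
            norm_num
      have hWbdd : ∀ ω, W ω ≤ Real.exp (n * (l * γ * B)) :=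
        fun ω => Real.exp_le_exp.mpr (hGbdd ω)
      -- integrability
      have hWaesm : AEStronglyMeasurable W P := (hWsm.mono (F.le n)).aestronglyMeasurable
      have hWint : Integrable W P := by
        refine Integrable.mono' (integrable_const (Real.exp (n * (l * γ * B)))) hWaesm ?_
        filter_upwards with ω
        rw [Real.norm_eq_abs, abs_of_pos (hWpos ω)]
        exact hWbdd ω
      have hgaesm : AEStronglyMeasurable g P := by
        refine Real.continuous_exp.comp_aestronglyMeasurable ?_
        exact (((hXsm (n + 1)).sub aestronglyMeasurable_const).const_mul l)
      have hgpos : ∀ ω, 0 < g ω := fun ω => Real.exp_pos _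
      have hgbdd : ∀ ω, g ω ≤ Real.exp (l * B) := by
        intro ω
        apply Real.exp_le_exp.mpr
        have hx := hXbdd (n + 1) ω
        have := hμ0 (n + 1)
        nlinarith [hx.2]
      have hgint : Integrable g P := by
        refine Integrable.mono' (integrable_const (Real.exp (l * B))) hgaesm ?_
        filter_upwards with ω
        rw [Real.norm_eq_abs, abs_of_pos (hgpos ω)]
        exact hgbdd ω
      have hindWint : Integrable (A.indicator W) P := hWint.indicator hAm0
      have hindWcint : Integrable (Aᶜ.indicator W) P := hWint.indicator hAm0.compl
      have hprodint : Integrable (fun ω => A.indicator W ω * g ω) P := by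
        refine Integrable.mono'
          (integrable_const (Real.exp (n * (l * γ * B)) * Real.exp (l * B)))
          ((hWaesm.indicator hAm0).mul hgaesm) ?_
        filter_upwards with ω
        rw [Real.norm_eq_abs, abs_mul]
        have h1 : |A.indicator W ω| ≤ Real.exp (n * (l * γ * B)) := by
          rw [abs_of_nonneg (Set.indicator_nonneg (fun ω _ => (hWpos ω).le) ω)]
          by_cases hA : ω ∈ A
          · rw [Set.indicator_of_mem hA]; exact hWbdd ω
          · rw [Set.indicator_of_notMem hA]; positivity
        have h2 : |g ω| ≤ Real.exp (l * B) := by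
          rw [abs_of_pos (hgpos ω)]; exact hgbdd ω
        exact mul_le_mul h1 h2 (abs_nonneg _) (Real.exp_pos _).le
      -- independence
      have hind0 := hXindep (n + 1) n (Nat.lt_succ_self n)
      have hcg : MeasurableSpace.comap g inferInstance
          ≤ MeasurableSpace.comap (X (n + 1)) inferInstance := by
        rw [show g = (fun x : ℝ => Real.exp (l * (x - μ (n + 1)))) ∘ (X (n + 1)) from rfl,
          ← MeasurableSpace.comap_comp]
        exact MeasurableSpace.comap_mono (measurable_iff_comap_le.mp
          (Real.measurable_exp.comp ((measurable_id.sub_const (μ (n + 1))).const_mul l)))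
      have hcW : MeasurableSpace.comap (A.indicator W) inferInstance ≤ F n :=
        measurable_iff_comap_le.mp (hWsm.indicator hAmeas).measurable
      have hIndep : IndepFun g (A.indicator W) P := by
        rw [IndepFun_iff_Indep]
        exact indep_of_indep_of_le_right (indep_of_indep_of_le_left hind0 hcg) hcW
      -- hoeffding bound for g
      have hgle : ∫ ω, g ω ∂P ≤ Real.exp (B ^ 2 / 8 * l ^ 2) := by
        have h := aux_hoeffding P hB (X (n + 1)) (hXsm (n + 1)) (hXbdd (n + 1)) hl.le
        rwa [hXmean (n + 1)] at h
      have hindWnonneg : 0 ≤ ∫ ω, A.indicator W ω ∂P :=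
        integral_nonneg fun ω => Set.indicator_nonneg (fun ω _ => (hWpos ω).le) ω
      -- main computation
      calc (∫ ω, Real.exp (∑ s ∈ Finset.Icc 1 (n + 1),
            (l * γ ^ (n + 1 - s) * ε s ω * (X s ω - μ s)
              - B ^ 2 / 8 * l ^ 2 * γ ^ (2 * (n + 1 - s)) * ε s ω)) ∂P)
          = ∫ ω, (Aᶜ.indicator W ω
              + Real.exp (-(B ^ 2 / 8 * l ^ 2)) * (A.indicator W ω * g ω)) ∂P := by
            exact integral_congr_ae (Filter.Eventually.of_forall hpt)
        _ = (∫ ω, Aᶜ.indicator W ω ∂P)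
              + Real.exp (-(B ^ 2 / 8 * l ^ 2)) * ∫ ω, A.indicator W ω * g ω ∂P := by
            rw [integral_add hindWcint (hprodint.const_mul _), integral_const_mul]
        _ = (∫ ω, Aᶜ.indicator W ω ∂P)
              + Real.exp (-(B ^ 2 / 8 * l ^ 2))
                * ((∫ ω, g ω ∂P) * ∫ ω, A.indicator W ω ∂P) := by
            congr 1
            congr 1
            rw [show (fun ω => A.indicator W ω * g ω) = fun ω => g ω * A.indicator W ω by
              ext ω; ring]
            exact IndepFun.integral_mul_eq_mul_integral hIndep hgint.1 hindWint.1
        _ ≤ (∫ ω, Aᶜ.indicator W ω ∂P)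
              + Real.exp (-(B ^ 2 / 8 * l ^ 2))
                * (Real.exp (B ^ 2 / 8 * l ^ 2) * ∫ ω, A.indicator W ω ∂P) := by
            have := mul_le_mul_of_nonneg_right hgle hindWnonneg
            nlinarith [Real.exp_pos (-(B ^ 2 / 8 * l ^ 2))]
        _ = (∫ ω, Aᶜ.indicator W ω ∂P) + ∫ ω, A.indicator W ω ∂P := by
            rw [← mul_assoc, ← Real.exp_add]
            norm_num
        _ = ∫ ω, W ω ∂P := by
            rw [← integral_add hindWcint hindWint]
            refine integral_congr_ae (Filter.Eventually.of_forall fun ω => ?_)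
            exact congrFun (Set.indicator_compl_add_self A W) ω
        _ ≤ 1 := ih (l * γ) hL
  -- conclude
  have heq : (∫ ω, Real.exp
        (l * ((∑ s ∈ Finset.Icc 1 t, γ ^ ((t - s : ℕ)) * X s ω * ε s ω)
            - ∑ s ∈ Finset.Icc 1 t, γ ^ ((t - s : ℕ)) * μ s * ε s ω)
          - B ^ 2 / 8 * l ^ 2 * ∑ s ∈ Finset.Icc 1 t, γ ^ ((2 * (t - s) : ℕ)) * ε s ω) ∂P)
      = ∫ ω, Real.exp (∑ s ∈ Finset.Icc 1 t,
        (l * γ ^ (t - s) * ε s ω * (X s ω - μ s)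
          - B ^ 2 / 8 * l ^ 2 * γ ^ (2 * (t - s)) * ε s ω)) ∂P := by
    congr 1
    funext ω
    congr 1
    rw [mul_sub, Finset.mul_sum, Finset.mul_sum, Finset.mul_sum,
      ← Finset.sum_sub_distrib, ← Finset.sum_sub_distrib]
    refine Finset.sum_congr rfl fun s _ => ?_
    ring
  rw [heq]
  exact key t l hl
end

section
/- With the notation of the discounted supermartingale construction, for every λ > 0, x > 0 and t ≥ 1, P( (S_t(γ) - M_t(γ))/sqrt(N_t(γ²)) > x/(λ·sqrt(N_t(γ²))) + λB²·sqrt(N_t(γ²))/8 ) ≤ exp(-x), where the probability is interpreted as 0 on the event N_t(γ²) = 0. -/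
open MeasureTheory ProbabilityTheory

lemma aux_ineq (p : ℝ) (hp0 : 0 ≤ p) (hp1 : p ≤ 1) (h : ℝ) :
    (1 - p) + p * Real.exp h ≤ Real.exp (h * p + h ^ 2 / 8) := by
  set g : ℝ → ℝ := fun y => (1 - p) + p * Real.exp y with hg
  have hgpos : ∀ y, 0 < g y := by
    intro y
    rcases lt_or_eq_of_le hp0 with hp | hp
    · have := Real.exp_pos y
      simp only [hg]; nlinarith
    · simp only [hg, ← hp]; norm_num
  set φ : ℝ → ℝ := fun y => y * p + y ^ 2 / 8 - Real.log (g y) with hφdef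
  set φ' : ℝ → ℝ := fun y => p + y / 4 - p * Real.exp y / g y with hφ'def
  have hdg : ∀ y, HasDerivAt g (p * Real.exp y) y := by
    intro y
    exact ((Real.hasDerivAt_exp y).const_mul p).const_add (1 - p)
  have hdφ : ∀ y, HasDerivAt φ (φ' y) y := by
    intro y
    have h1 : HasDerivAt (fun y : ℝ => y * p) p y := by
      simpa using (hasDerivAt_id y).mul_const p
    have h2 : HasDerivAt (fun y : ℝ => y ^ 2 / 8) (y / 4) y := by
      have := (hasDerivAt_pow 2 y).div_const 8
      refine this.congr_deriv ?_
      norm_num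
      ring
    have h3 : HasDerivAt (fun y => Real.log (g y)) (p * Real.exp y / g y) y :=
      (hdg y).log (hgpos y).ne'
    exact (h1.add h2).sub h3
  have hdφ' : ∀ y, HasDerivAt φ' (1 / 4 - p * Real.exp y * (1 - p) / (g y) ^ 2) y := by
    intro y
    have h1 : HasDerivAt (fun y : ℝ => p + y / 4) (1 / 4) y := by
      simpa using ((hasDerivAt_id y).div_const 4).const_add p
    have h2 : HasDerivAt (fun y => p * Real.exp y / g y)
        ((p * Real.exp y * g y - p * Real.exp y * (p * Real.exp y)) / (g y) ^ 2) y :=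
      ((Real.hasDerivAt_exp y).const_mul p).div (hdg y) (hgpos y).ne'
    have : HasDerivAt φ'
        (1 / 4 - (p * Real.exp y * g y - p * Real.exp y * (p * Real.exp y)) / (g y) ^ 2) y :=
      h1.sub h2
    convert this using 1
    have := (hgpos y).ne'
    field_simp [hg]
    ring
  have hφ''nonneg : ∀ y, 0 ≤ 1 / 4 - p * Real.exp y * (1 - p) / (g y) ^ 2 := by
    intro y
    rw [sub_nonneg, div_le_iff₀ (by have := hgpos y; positivity)]
    have he : 0 ≤ p * Real.exp y := by positivity
    have : g y = (1 - p) + p * Real.exp y := rfl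
    nlinarith [sq_nonneg ((1 - p) - p * Real.exp y)]
  have hmono : Monotone φ' := monotone_of_hasDerivAt_nonneg hdφ' (fun y => hφ''nonneg y)
  have hφ'0 : φ' 0 = 0 := by
    simp only [hφ'def, hg]
    norm_num
  have hφ0 : φ 0 = 0 := by
    simp only [hφdef, hg]
    norm_num
  have hφnonneg : 0 ≤ φ h := by
    rcases le_or_gt 0 h with hh | hh
    · have : MonotoneOn φ (Set.Ici 0) := by
        apply monotoneOn_of_hasDerivWithinAt_nonneg (convex_Ici 0)
          (fun y _ => (hdφ y).continuousAt.continuousWithinAt)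
          (fun y _ => (hdφ y).hasDerivWithinAt)
        intro y hy
        rw [interior_Ici] at hy
        rw [← hφ'0]
        exact hmono hy.le
      rw [← hφ0]
      exact this (by norm_num) hh hh
    · have : AntitoneOn φ (Set.Iic 0) := by
        apply antitoneOn_of_hasDerivWithinAt_nonpos (convex_Iic 0)
          (fun y _ => (hdφ y).continuousAt.continuousWithinAt)
          (fun y _ => (hdφ y).hasDerivWithinAt)
        intro y hy
        rw [interior_Iic] at hy
        rw [← hφ'0]
        exact hmono hy.le
      rw [← hφ0]
      exact this hh.le (by norm_num) hh.le
  have hlog : Real.log (g h) ≤ h * p + h ^ 2 / 8 := by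
    have := hφnonneg
    simp only [hφdef] at this
    linarith
  calc g h = Real.exp (Real.log (g h)) := (Real.exp_log (hgpos h)).symm
    _ ≤ Real.exp (h * p + h ^ 2 / 8) := Real.exp_le_exp.2 hlog

lemma hoeffding_mgf {Ω : Type*} {m : MeasurableSpace Ω} (P : Measure Ω) [IsProbabilityMeasure P]
    (B : ℝ) (hB : 0 < B) (Y : Ω → ℝ) (hY : AEStronglyMeasurable Y P)
    (hYb : ∀ ω, Y ω ∈ Set.Icc 0 B) (c : ℝ) :
    ∫ ω, Real.exp (c * Y ω) ∂P ≤ Real.exp (c * (∫ ω, Y ω ∂P) + c ^ 2 * B ^ 2 / 8) := by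
  have hYint : Integrable Y P := by
    apply Integrable.mono' (integrable_const B) hY
    filter_upwards with ω
    rw [Real.norm_eq_abs, abs_le]
    exact ⟨by linarith [(hYb ω).1], (hYb ω).2⟩
  have hpt : ∀ ω, Real.exp (c * Y ω) ≤ (1 - Y ω / B) + (Y ω / B) * Real.exp (c * B) := by
    intro ω
    obtain ⟨h0, h1⟩ := hYb ω
    set s := Y ω / B with hs
    have hs0 : 0 ≤ s := by positivity
    have hs1 : s ≤ 1 := (div_le_one hB).2 h1
    have key := convexOn_exp.2 (Set.mem_univ (0:ℝ)) (Set.mem_univ (c * B))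
      (by linarith : (0:ℝ) ≤ 1 - s) hs0 (by ring)
    simp only [smul_eq_mul, mul_zero, Real.exp_zero, mul_one] at key
    have hY' : c * Y ω = (1 - s) * 0 + s * (c * B) := by
      rw [hs]
      field_simp [hs]
      ring
    rw [hY']
    simpa [mul_zero, Real.exp_zero] using key
  have hLint : Integrable (fun ω => Real.exp (c * Y ω)) P := by
    apply Integrable.mono' (integrable_const (Real.exp (|c| * B)))
      (Real.continuous_exp.comp_aestronglyMeasurable (hY.const_smul c))
    filter_upwards with ω
    rw [Real.norm_eq_abs, abs_of_pos (Real.exp_pos _), Real.exp_le_exp]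
    rcases le_or_gt 0 c with hc | hc
    · calc c * Y ω ≤ c * B := by nlinarith [(hYb ω).2, (hYb ω).1]
        _ ≤ |c| * B := by rw [abs_of_nonneg hc]
    · calc c * Y ω ≤ 0 := by nlinarith [(hYb ω).1]
        _ ≤ |c| * B := by positivity
  have hRint : Integrable (fun ω => (1 - Y ω / B) + (Y ω / B) * Real.exp (c * B)) P := by
    apply Integrable.add
    · exact (integrable_const 1).sub (hYint.div_const B)
    · exact (hYint.div_const B).mul_const _
  set μY := ∫ ω, Y ω ∂P with hμY
  have hμ0 : 0 ≤ μY := integral_nonneg fun ω => (hYb ω).1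
  have hμB : μY ≤ B := by
    calc μY ≤ ∫ _, B ∂P := integral_mono hYint (integrable_const B) fun ω => (hYb ω).2
      _ = B := by simp
  have step1 : ∫ ω, Real.exp (c * Y ω) ∂P ≤ (1 - μY / B) + (μY / B) * Real.exp (c * B) := by
    calc ∫ ω, Real.exp (c * Y ω) ∂P
        ≤ ∫ ω, ((1 - Y ω / B) + (Y ω / B) * Real.exp (c * B)) ∂P :=
          integral_mono hLint hRint hpt
      _ = (1 - μY / B) + (μY / B) * Real.exp (c * B) := by
          have hI1 : Integrable (fun ω => 1 - Y ω / B) P := by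
            exact (integrable_const (1:ℝ)).sub (hYint.div_const B)
          have hI2 : Integrable (fun ω => Y ω / B * Real.exp (c * B)) P :=
            (hYint.div_const B).mul_const _
          rw [integral_add hI1 hI2, integral_sub (integrable_const 1) (hYint.div_const B),
            integral_mul_const, integral_div]
          simp [hμY]
  have step2 : (1 - μY / B) + (μY / B) * Real.exp (c * B)
      ≤ Real.exp ((c * B) * (μY / B) + (c * B) ^ 2 / 8) := by
    exact aux_ineq (μY / B) (by positivity) ((div_le_one hB).2 hμB) (c * B)
  have heq : (c * B) * (μY / B) + (c * B) ^ 2 / 8 = c * μY + c ^ 2 * B ^ 2 / 8 := by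
    field_simp
  rw [heq] at step2
  linarith

theorem stmt_10 {Ω : Type*} {m0 : MeasurableSpace Ω} (P : Measure Ω) [IsProbabilityMeasure P]
    (F : Filtration ℕ m0) (B : ℝ) (hB : 0 < B)
    (X : ℕ → Ω → ℝ) (μ : ℕ → ℝ) (ε : ℕ → Ω → ℝ)
    (hXmeas : ∀ s t : ℕ, s ≤ t → StronglyMeasurable[F t] (X s))
    (hXindep : ∀ s t : ℕ, t < s →
      Indep (MeasurableSpace.comap (X s) inferInstance) (F t) P)
    (hXbdd : ∀ t ω, X t ω ∈ Set.Icc 0 B)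
    (hXmean : ∀ t, ∫ ω, X t ω ∂P = μ t)
    (hεval : ∀ t ω, ε t ω = 0 ∨ ε t ω = 1)
    (hεmeas : ∀ t : ℕ, StronglyMeasurable[F (t - 1)] (ε t))
    (γ : ℝ) (hγ : γ ∈ Set.Ioc (0:ℝ) 1)
    (l x : ℝ) (hl : 0 < l) (hx : 0 < x) (t : ℕ) (ht : 1 ≤ t) :
    P {ω | 0 < (∑ s ∈ Finset.Icc 1 t, γ ^ ((2 * (t - s) : ℕ)) * ε s ω) ∧
        ((∑ s ∈ Finset.Icc 1 t, γ ^ ((t - s : ℕ)) * X s ω * ε s ω)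
            - ∑ s ∈ Finset.Icc 1 t, γ ^ ((t - s : ℕ)) * μ s * ε s ω) /
          Real.sqrt (∑ s ∈ Finset.Icc 1 t, γ ^ ((2 * (t - s) : ℕ)) * ε s ω) >
        x / (l * Real.sqrt (∑ s ∈ Finset.Icc 1 t, γ ^ ((2 * (t - s) : ℕ)) * ε s ω))
          + l * B ^ 2 * Real.sqrt (∑ s ∈ Finset.Icc 1 t, γ ^ ((2 * (t - s) : ℕ)) * ε s ω) / 8} ≤
      ENNReal.ofReal (Real.exp (-x)) := by
  obtain ⟨hγ0, hγ1⟩ := hγ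
  -- basic facts
  have hXm0 : ∀ s, StronglyMeasurable (X s) := fun s => (hXmeas s s le_rfl).mono (F.le s)
  have hεm0 : ∀ s, StronglyMeasurable (ε s) := fun s => (hεmeas s).mono (F.le (s - 1))
  have hXint : ∀ s, Integrable (X s) P := by
    intro s
    apply Integrable.mono' (integrable_const B) (hXm0 s).aestronglyMeasurable
    filter_upwards with ω
    rw [Real.norm_eq_abs, abs_le]
    exact ⟨by linarith [(hXbdd s ω).1], (hXbdd s ω).2⟩
  have hμmem : ∀ s, μ s ∈ Set.Icc 0 B := by
    intro s
    rw [← hXmean s]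
    constructor
    · exact integral_nonneg fun ω => (hXbdd s ω).1
    · calc ∫ ω, X s ω ∂P ≤ ∫ _, B ∂P :=
          integral_mono (hXint s) (integrable_const B) fun ω => (hXbdd s ω).2
        _ = B := by simp
  have hεb : ∀ s ω, 0 ≤ ε s ω ∧ ε s ω ≤ 1 := by
    intro s ω; rcases hεval s ω with h | h <;> rw [h] <;> norm_num
  set c : ℕ → ℝ := fun s => l * γ ^ (t - s) with hc
  set d : ℕ → ℝ := fun s => l ^ 2 * B ^ 2 / 8 * γ ^ (2 * (t - s)) with hd
  set e : ℕ → Ω → ℝ := fun s ω => c s * (X s ω - μ s) * ε s ω - d s * ε s ω with he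
  set W : ℕ → Ω → ℝ := fun u ω => Real.exp (∑ s ∈ Finset.Icc 1 u, e s ω) with hW
  have hcb : ∀ s, 0 < c s ∧ c s ≤ l := by
    intro s
    constructor
    · positivity
    · have : γ ^ (t - s) ≤ 1 := pow_le_one₀ hγ0.le hγ1
      calc c s ≤ l * 1 := by
            apply mul_le_mul_of_nonneg_left this hl.le
        _ = l := mul_one l
  have hd0 : ∀ s, 0 ≤ d s := by intro s; positivity
  have hcd : ∀ s, (c s) ^ 2 * B ^ 2 / 8 = d s := by
    intro s
    simp only [hc, hd]
    rw [mul_pow, ← pow_mul, mul_comm (t - s) 2]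
    ring
  have hebd1 : ∀ s ω, c s * (X s ω - μ s) - d s ≤ l * B := by
    intro s ω
    have h1 : (l - c s) * B ≥ 0 := mul_nonneg (by linarith [(hcb s).2]) hB.le
    have h2 : c s * (B - (X s ω - μ s)) ≥ 0 :=
      mul_nonneg (hcb s).1.le (by linarith [(hXbdd s ω).2, (hμmem s).1])
    nlinarith [hd0 s]
  have hebd : ∀ s ω, e s ω ≤ l * B := by
    intro s ω
    rcases hεval s ω with h | h
    · simp only [he, h, mul_zero, sub_zero]
      positivity
    · simp only [he, h, mul_one]
      exact hebd1 s ω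
  have hWle : ∀ u ω, W u ω ≤ Real.exp (u * (l * B)) := by
    intro u ω
    apply Real.exp_le_exp.2
    calc ∑ s ∈ Finset.Icc 1 u, e s ω ≤ ∑ _s ∈ Finset.Icc 1 u, l * B :=
        Finset.sum_le_sum fun s _ => hebd s ω
      _ = u * (l * B) := by
        rw [Finset.sum_const, Nat.card_Icc]
        simp [nsmul_eq_mul]
  have hWpos : ∀ u ω, 0 < W u ω := fun u ω => Real.exp_pos _
  have hWm : ∀ u, StronglyMeasurable[F u] (W u) := by
    intro u
    apply Real.continuous_exp.comp_stronglyMeasurable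
    apply Finset.stronglyMeasurable_fun_sum
    intro s hs
    have hsu : s ≤ u := (Finset.mem_Icc.1 hs).2
    have hεu : StronglyMeasurable[F u] (ε s) :=
      (hεmeas s).mono (F.mono (by omega))
    have hXu : StronglyMeasurable[F u] (X s) := hXmeas s u hsu
    exact (((hXu.sub stronglyMeasurable_const).const_mul (c s)).mul hεu).sub
      (hεu.const_mul (d s))
  have hWint : ∀ u, Integrable (W u) P := by
    intro u
    apply Integrable.mono' (integrable_const (Real.exp (u * (l * B))))
      (((hWm u).mono (F.le u)).aestronglyMeasurable)
    filter_upwards with ω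
    rw [Real.norm_eq_abs, abs_of_pos (hWpos u ω)]
    exact hWle u ω
  -- key supermartingale bound
  have hkey : ∀ u, ∫ ω, W u ω ∂P ≤ 1 := by
    intro u
    induction u with
    | zero =>
      have : ∀ ω, W 0 ω = 1 := by
        intro ω
        simp only [hW]
        rw [Finset.Icc_eq_empty (by omega)]
        simp
      rw [integral_congr_ae (Filter.Eventually.of_forall this)]
      simp
    | succ u ih =>
      set H : Ω → ℝ := fun ω =>
        Real.exp (c (u + 1) * (X (u + 1) ω - μ (u + 1)) - d (u + 1)) with hH
      set G : Ω → ℝ := fun ω => W u ω * ε (u + 1) ω with hG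
      set K : Ω → ℝ := fun ω => W u ω * (1 - ε (u + 1) ω) with hK
      have hins : Finset.Icc 1 (u + 1) = insert (u + 1) (Finset.Icc 1 u) := by
        ext a
        simp only [Finset.mem_Icc, Finset.mem_insert]
        omega
      have hsplit : ∀ ω, W (u + 1) ω = H ω * G ω + K ω := by
        intro ω
        have h1 : W (u + 1) ω = W u ω * Real.exp (e (u + 1) ω) := by
          simp only [hW, hins]
          rw [Finset.sum_insert (by simp), add_comm, Real.exp_add]
        rw [h1]
        rcases hεval (u + 1) ω with h | h
        · simp [hH, hG, hK, he, h]
        · simp [hH, hG, hK, he, h, mul_comm]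
      have hHbd : ∀ ω, H ω ≤ Real.exp (l * B) := fun ω =>
        Real.exp_le_exp.2 (hebd1 (u + 1) ω)
      have hHpos : ∀ ω, 0 < H ω := fun ω => Real.exp_pos _
      have hHm : StronglyMeasurable H := by
        apply Real.continuous_exp.comp_stronglyMeasurable
        exact ((((hXm0 (u + 1)).sub stronglyMeasurable_const).const_mul
          (c (u + 1))).sub stronglyMeasurable_const)
      have hGmF : StronglyMeasurable[F u] G := by
        have : StronglyMeasurable[F u] (ε (u + 1)) := by
          have := hεmeas (u + 1)
          simpa using this
        exact (hWm u).mul this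
      have hGm : StronglyMeasurable G := hGmF.mono (F.le u)
      have hKm : StronglyMeasurable K :=
        ((hWm u).mono (F.le u)).mul
          (stronglyMeasurable_const.sub ((hεm0 (u + 1))))
      have hGbd : ∀ ω, |G ω| ≤ Real.exp (u * (l * B)) := by
        intro ω
        rw [abs_of_nonneg (mul_nonneg (hWpos u ω).le (hεb (u + 1) ω).1)]
        calc W u ω * ε (u + 1) ω ≤ W u ω * 1 :=
            mul_le_mul_of_nonneg_left (hεb (u + 1) ω).2 (hWpos u ω).le
          _ = W u ω := mul_one _
          _ ≤ _ := hWle u ω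
      have hKbd : ∀ ω, |K ω| ≤ Real.exp (u * (l * B)) := by
        intro ω
        rw [abs_of_nonneg (mul_nonneg (hWpos u ω).le (by linarith [(hεb (u + 1) ω).2]))]
        calc W u ω * (1 - ε (u + 1) ω) ≤ W u ω * 1 :=
            mul_le_mul_of_nonneg_left (by linarith [(hεb (u + 1) ω).1]) (hWpos u ω).le
          _ = W u ω := mul_one _
          _ ≤ _ := hWle u ω
      have hGint : Integrable G P := by
        apply Integrable.mono' (integrable_const (Real.exp (u * (l * B))))
          hGm.aestronglyMeasurable
        filter_upwards with ω
        exact hGbd ω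
      have hKint : Integrable K P := by
        apply Integrable.mono' (integrable_const (Real.exp (u * (l * B))))
          hKm.aestronglyMeasurable
        filter_upwards with ω
        exact hKbd ω
      have hHGint : Integrable (fun ω => H ω * G ω) P := by
        apply Integrable.mono'
          (integrable_const (Real.exp (l * B) * Real.exp (u * (l * B))))
          (hHm.mul hGm).aestronglyMeasurable
        filter_upwards with ω
        simp only [Pi.mul_apply]
        rw [Real.norm_eq_abs, abs_mul, abs_of_pos (hHpos ω)]
        apply mul_le_mul (hHbd ω) (hGbd ω) (abs_nonneg _) (Real.exp_pos _).le
      -- independence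
      have hind : Indep (MeasurableSpace.comap (X (u + 1)) inferInstance) (F u) P :=
        hXindep (u + 1) u (lt_add_one u)
      have hXGfun : IndepFun (X (u + 1)) G P := by
        exact indep_of_indep_of_le_right hind hGmF.measurable.comap_le
      have hHGfun : IndepFun H G P := by
        have hφ : Measurable fun y : ℝ =>
            Real.exp (c (u + 1) * (y - μ (u + 1)) - d (u + 1)) := by
          fun_prop
        exact hXGfun.comp hφ measurable_id
      have hintH : ∫ ω, H ω ∂P ≤ 1 := by
        have heq : ∀ ω, H ω = Real.exp (c (u + 1) * X (u + 1) ω) *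
            Real.exp (-(c (u + 1) * μ (u + 1) + d (u + 1))) := by
          intro ω
          simp only [hH]
          rw [← Real.exp_add]
          ring_nf
        rw [integral_congr_ae (Filter.Eventually.of_forall heq), integral_mul_const]
        have hmgf := hoeffding_mgf P B hB (X (u + 1)) (hXm0 (u + 1)).aestronglyMeasurable
          (hXbdd (u + 1)) (c (u + 1))
        rw [hXmean (u + 1)] at hmgf
        calc (∫ ω, Real.exp (c (u + 1) * X (u + 1) ω) ∂P) *
              Real.exp (-(c (u + 1) * μ (u + 1) + d (u + 1)))
            ≤ Real.exp (c (u + 1) * μ (u + 1) + (c (u + 1)) ^ 2 * B ^ 2 / 8) *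
              Real.exp (-(c (u + 1) * μ (u + 1) + d (u + 1))) :=
              mul_le_mul_of_nonneg_right hmgf (Real.exp_pos _).le
          _ = Real.exp ((c (u + 1)) ^ 2 * B ^ 2 / 8 - d (u + 1)) := by
              rw [← Real.exp_add]; ring_nf
          _ = 1 := by rw [hcd (u + 1)]; simp
      have hintG : 0 ≤ ∫ ω, G ω ∂P :=
        integral_nonneg fun ω => mul_nonneg (hWpos u ω).le (hεb (u + 1) ω).1
      have hmul : ∫ ω, H ω * G ω ∂P = (∫ ω, H ω ∂P) * ∫ ω, G ω ∂P := by
        exact hHGfun.integral_fun_mul_eq_mul_integral hHm.aestronglyMeasurable hGm.aestronglyMeasurable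
      have hGK : (∫ ω, G ω ∂P) + ∫ ω, K ω ∂P = ∫ ω, W u ω ∂P := by
        rw [← integral_add hGint hKint]
        apply integral_congr_ae (Filter.Eventually.of_forall _)
        intro ω
        simp only [hG, hK]
        ring
      calc ∫ ω, W (u + 1) ω ∂P = ∫ ω, (H ω * G ω + K ω) ∂P :=
          integral_congr_ae (Filter.Eventually.of_forall hsplit)
        _ = (∫ ω, H ω * G ω ∂P) + ∫ ω, K ω ∂P := integral_add hHGint hKint
        _ ≤ (∫ ω, G ω ∂P) + ∫ ω, K ω ∂P := by
            rw [hmul]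
            have := mul_le_mul_of_nonneg_right hintH hintG
            linarith [this]
        _ = ∫ ω, W u ω ∂P := hGK
        _ ≤ 1 := ih
  -- Markov / Chernoff step
  set Z : Ω → ℝ := fun ω => ∑ s ∈ Finset.Icc 1 t, e s ω with hZ
  have hZint : Integrable (fun ω => Real.exp (1 * Z ω)) P := by
    simpa [hZ, hW] using hWint t
  have hch := measure_ge_le_exp_mul_mgf (μ := P) (X := Z) x zero_le_one hZint
  have hmgfZ : mgf Z P 1 ≤ 1 := by
    have h0 : mgf Z P 1 = ∫ ω, Real.exp (1 * Z ω) ∂P := rfl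
    have h1 : (∫ ω, Real.exp (1 * Z ω) ∂P) = ∫ ω, W t ω ∂P := by
      apply integral_congr_ae (Filter.Eventually.of_forall fun ω => ?_)
      simp [hZ, hW]
    rw [h0, h1]
    exact hkey t
  have hch2 : (P {ω | x ≤ Z ω}).toReal ≤ Real.exp (-x) := by
    calc (P {ω | x ≤ Z ω}).toReal ≤ Real.exp (-1 * x) * mgf Z P 1 := hch
      _ ≤ Real.exp (-1 * x) * 1 := by
          apply mul_le_mul_of_nonneg_left hmgfZ (Real.exp_pos _).le
      _ = Real.exp (-x) := by rw [mul_one]; norm_num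
  have hsubset : {ω | 0 < (∑ s ∈ Finset.Icc 1 t, γ ^ ((2 * (t - s) : ℕ)) * ε s ω) ∧
        ((∑ s ∈ Finset.Icc 1 t, γ ^ ((t - s : ℕ)) * X s ω * ε s ω)
            - ∑ s ∈ Finset.Icc 1 t, γ ^ ((t - s : ℕ)) * μ s * ε s ω) /
          Real.sqrt (∑ s ∈ Finset.Icc 1 t, γ ^ ((2 * (t - s) : ℕ)) * ε s ω) >
        x / (l * Real.sqrt (∑ s ∈ Finset.Icc 1 t, γ ^ ((2 * (t - s) : ℕ)) * ε s ω))
          + l * B ^ 2 * Real.sqrt (∑ s ∈ Finset.Icc 1 t, γ ^ ((2 * (t - s) : ℕ)) * ε s ω) / 8}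
      ⊆ {ω | x ≤ Z ω} := by
    intro ω hω
    obtain ⟨hN, hineq⟩ := hω
    set N := ∑ s ∈ Finset.Icc 1 t, γ ^ ((2 * (t - s) : ℕ)) * ε s ω with hNdef
    set S := ∑ s ∈ Finset.Icc 1 t, γ ^ ((t - s : ℕ)) * X s ω * ε s ω with hSdef
    set M := ∑ s ∈ Finset.Icc 1 t, γ ^ ((t - s : ℕ)) * μ s * ε s ω with hMdef
    set a := Real.sqrt N with ha
    have ha0 : 0 < a := Real.sqrt_pos.2 hN
    have ha2 : a * a = N := Real.mul_self_sqrt hN.le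
    have hZeq : Z ω = l * S - l * M - l ^ 2 * B ^ 2 / 8 * N := by
      simp only [hZ, hSdef, hMdef, hNdef, he, hc, hd]
      rw [Finset.mul_sum, Finset.mul_sum, Finset.mul_sum, ← Finset.sum_sub_distrib,
        ← Finset.sum_sub_distrib]
      apply Finset.sum_congr rfl
      intro s _
      ring
    have hstep := mul_lt_mul_of_pos_right hineq (mul_pos hl ha0)
    have hL : (x / (l * a) + l * B ^ 2 * a / 8) * (l * a)
        = x + l ^ 2 * B ^ 2 * (a * a) / 8 := by
      field_simp
    have hR : (S - M) / a * (l * a) = l * S - l * M := by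
      field_simp
    rw [hL, hR, ha2] at hstep
    rw [Set.mem_setOf_eq, hZeq]
    linarith
  calc P _ ≤ P {ω | x ≤ Z ω} := measure_mono hsubset
    _ = ENNReal.ofReal ((P {ω | x ≤ Z ω}).toReal) := by
        rw [ENNReal.ofReal_toReal (measure_ne_top P _)]
    _ ≤ ENNReal.ofReal (Real.exp (-x)) := ENNReal.ofReal_le_ofReal hch2
end

section
/- Fix γ ∈ (0,1), an arm j, and a time t such that the mean rewards are constant over the last D(γ) rounds before t (i.e. μ_s(j) = μ_t(j) for all s with t - D(γ) < s ≤ t), where D(γ) = log((1-γ)ξ log n_K(γ))/log γ and n_K(γ) ≥ 1 is any fixed real with (1-γ)ξ log n_K(γ) ∈ (0,1). Suppose all means μ_s(j) lie in [0,B]. Let M_t(γ,j) = Σ_{s=1}^t γ^{t-s} 1{I_s=j} μ_s(j) and N_t(γ,j) = Σ_{s=1}^t γ^{t-s} 1{I_s=j} > 0. Then |M_t(γ,j)/N_t(γ,j) − μ_t(j)| ≤ B·min(1, γ^{D(γ)}/((1-γ)·N_t(γ,j))) ≤ B·sqrt(ξ log n_K(γ)/N_t(γ,j)). -/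
theorem stmt_15 (γ ξ B nK : ℝ) (hγ : γ ∈ Set.Ioo (0:ℝ) 1) (hξ : 0 < ξ) (hB : 0 < B)
    (hnK : 1 ≤ nK) (hprod : (1 - γ) * ξ * Real.log nK ∈ Set.Ioo (0:ℝ) 1)
    (I : ℕ → ℕ) (j t : ℕ) (μ : ℕ → ℕ → ℝ)
    (hμ : ∀ s, μ s j ∈ Set.Icc 0 B)
    (D : ℝ) (hD : D = Real.log ((1 - γ) * ξ * Real.log nK) / Real.log γ)
    (hconst : ∀ s : ℕ, s ≤ t → (t : ℝ) - D < s → μ s j = μ t j)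
    (M N : ℝ)
    (hM : M = ∑ s ∈ Finset.Icc 1 t, γ ^ (t - s) * (if I s = j then (1:ℝ) else 0) * μ s j)
    (hN : N = ∑ s ∈ Finset.Icc 1 t, γ ^ (t - s) * (if I s = j then (1:ℝ) else 0))
    (hNpos : 0 < N) :
    |M / N - μ t j| ≤ B * min 1 (γ ^ D / ((1 - γ) * N)) ∧
      B * min 1 (γ ^ D / ((1 - γ) * N)) ≤ B * Real.sqrt (ξ * Real.log nK / N) := by
  obtain ⟨hγ0, hγ1⟩ := hγ
  set P : ℝ := (1 - γ) * ξ * Real.log nK with hPdef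
  obtain ⟨hP0, hP1⟩ := hprod
  have hlogγ : Real.log γ < 0 := Real.log_neg hγ0 hγ1
  -- γ ^ D = P
  have hγD : γ ^ D = P := by
    rw [Real.rpow_def_of_pos hγ0, hD, mul_comm, div_mul_cancel₀ _ (ne_of_lt hlogγ),
      Real.exp_log hP0]
  -- D > 0
  have hDpos : 0 < D := by
    rw [hD]
    exact div_pos_of_neg_of_neg (Real.log_neg hP0 hP1) hlogγ
  set m : ℕ := ⌈D⌉₊ with hm
  have hmD : D ≤ m := Nat.le_ceil D
  -- γ ^ m ≤ P
  have hγm : γ ^ m ≤ P := by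
    rw [← hγD]
    calc γ ^ m = γ ^ (m : ℝ) := (Real.rpow_natCast γ m).symm
    _ ≤ γ ^ D := Real.rpow_le_rpow_of_exponent_ge hγ0 hγ1.le hmD
  have h1γ : 0 < 1 - γ := by linarith
  -- bounds on M
  have hMnonneg : 0 ≤ M := by
    rw [hM]
    apply Finset.sum_nonneg
    intro s _
    have := (hμ s).1
    positivity
  have hMleBN : M ≤ B * N := by
    rw [hM, hN, Finset.mul_sum]
    apply Finset.sum_le_sum
    intro s _
    have h1 := (hμ s).1
    have h2 := (hμ s).2
    have hpow : (0:ℝ) ≤ γ ^ (t - s) := by positivity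
    by_cases h : I s = j <;> simp [h] <;> nlinarith
  have hμt0 := (hμ t).1
  have hμtB := (hμ t).2
  -- first bound : |M/N - μ t j| ≤ B
  have hbd1 : |M / N - μ t j| ≤ B := by
    rw [abs_le]
    constructor
    · have : 0 ≤ M / N := div_nonneg hMnonneg hNpos.le
      linarith
    · have : M / N ≤ B := (div_le_iff₀ hNpos).mpr (by linarith)
      linarith
  -- second bound
  have hkey : |M - μ t j * N| ≤ B * (P / (1 - γ)) := by
    have hsplit : M - μ t j * N =
        ∑ s ∈ Finset.Icc 1 t, γ ^ (t - s) * (if I s = j then (1:ℝ) else 0) * (μ s j - μ t j) := by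
      rw [hM, hN, Finset.mul_sum, ← Finset.sum_sub_distrib]
      exact Finset.sum_congr rfl fun s _ => by ring
    set f : ℕ → ℝ := fun s => γ ^ (t - s) * (if I s = j then (1:ℝ) else 0) * (μ s j - μ t j)
      with hf
    have hfilter : ∑ s ∈ (Finset.Icc 1 t).filter (fun s : ℕ => (s:ℝ) ≤ (t:ℝ) - D), f s
        = ∑ s ∈ Finset.Icc 1 t, f s := by
      apply Finset.sum_filter_of_ne
      intro s hs hfs
      by_contra h
      push_neg at h
      have hst : s ≤ t := (Finset.mem_Icc.mp hs).2
      have := hconst s hst h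
      apply hfs
      simp [hf, this]
    set S := (Finset.Icc 1 t).filter (fun s : ℕ => (s:ℝ) ≤ (t:ℝ) - D) with hS
    have habs : |∑ s ∈ S, f s| ≤ ∑ s ∈ S, B * γ ^ (t - s) := by
      refine (Finset.abs_sum_le_sum_abs _ _).trans (Finset.sum_le_sum fun s _ => ?_)
      have h1 := (hμ s).1
      have h2 := (hμ s).2
      have hpow : (0:ℝ) ≤ γ ^ (t - s) := by positivity
      have habsμ : |μ s j - μ t j| ≤ B := abs_le.mpr ⟨by linarith, by linarith⟩
      simp only [hf]
      by_cases h : I s = j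
      · rw [if_pos h, mul_one, abs_mul, abs_of_nonneg hpow, mul_comm B]
        exact mul_le_mul_of_nonneg_left habsμ hpow
      · rw [if_neg h, mul_zero, zero_mul, abs_zero]
        positivity
    -- bound the geometric-type sum
    have hsumγ : ∑ s ∈ S, γ ^ (t - s) ≤ γ ^ m / (1 - γ) := by
      have hinj : ∀ a ∈ S, ∀ b ∈ S, t - a = t - b → a = b := by
        intro a ha b hb hab
        simp only [hS, Finset.mem_filter, Finset.mem_Icc] at ha hb
        omega
      calc ∑ s ∈ S, γ ^ (t - s)
          = ∑ k ∈ S.image (fun s => t - s), γ ^ k := (Finset.sum_image hinj).symm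
        _ ≤ ∑ k ∈ Finset.Ico m t, γ ^ k := by
            apply Finset.sum_le_sum_of_subset_of_nonneg
            · intro k hk
              simp only [Finset.mem_image] at hk
              obtain ⟨s, hs, rfl⟩ := hk
              simp only [hS, Finset.mem_filter, Finset.mem_Icc] at hs
              obtain ⟨⟨hs1, hst⟩, hsD⟩ := hs
              rw [Finset.mem_Ico]
              constructor
              · rw [hm, Nat.ceil_le]
                have : ((t - s : ℕ) : ℝ) = (t : ℝ) - s := by
                  rw [Nat.cast_sub hst]
                rw [this]
                linarith
              · omega
            · intro k _ _
              positivity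
        _ ≤ γ ^ m / (1 - γ) := geom_sum_Ico_le_of_lt_one hγ0.le hγ1
    calc |M - μ t j * N| = |∑ s ∈ S, f s| := by rw [hsplit, ← hfilter]
      _ ≤ ∑ s ∈ S, B * γ ^ (t - s) := habs
      _ = B * ∑ s ∈ S, γ ^ (t - s) := by rw [Finset.mul_sum]
      _ ≤ B * (γ ^ m / (1 - γ)) := by
          apply mul_le_mul_of_nonneg_left _ hB.le
          exact hsumγ
      _ ≤ B * (P / (1 - γ)) := by gcongr
  have hbd2 : |M / N - μ t j| ≤ B * (P / ((1 - γ) * N)) := by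
    have heq : M / N - μ t j = (M - μ t j * N) / N := by field_simp
    rw [heq, abs_div, abs_of_pos hNpos]
    rw [div_le_iff₀ hNpos]
    calc |M - μ t j * N| ≤ B * (P / (1 - γ)) := hkey
      _ = B * (P / ((1 - γ) * N)) * N := by field_simp
  constructor
  · rw [hγD]
    have hmin : B * min 1 (P / ((1 - γ) * N)) = min (B * 1) (B * (P / ((1 - γ) * N))) := by
      rw [mul_min_of_nonneg _ _ hB.le]
    rw [hmin, le_min_iff]
    exact ⟨by simpa using hbd1, hbd2⟩
  · rw [hγD]
    have hx : P / ((1 - γ) * N) = ξ * Real.log nK / N := by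
      rw [hPdef]
      field_simp
    rw [hx]
    set x := ξ * Real.log nK / N with hxdef
    have hx0 : 0 ≤ x := by
      have : 0 ≤ Real.log nK := Real.log_nonneg hnK
      positivity
    apply mul_le_mul_of_nonneg_left _ hB.le
    rcases le_total x 1 with h | h
    · calc min 1 x ≤ x := min_le_right _ _
        _ ≤ Real.sqrt x := by
            nlinarith [Real.sqrt_nonneg x, Real.sq_sqrt hx0, sq_nonneg (Real.sqrt x - 1)]
    · calc min 1 x ≤ 1 := min_le_left _ _
        _ ≤ Real.sqrt x := by
            rw [show (1:ℝ) = Real.sqrt 1 from (Real.sqrt_one).symm]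
            exact Real.sqrt_le_sqrt h
end
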